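/- arXiv:2303.02611 — 9 statements merged into one kernel-verified Lean document; each statement's English description precedes it below -/
import Mathlib

section
/- Let G be a finite connected simple graph, let v,w be vertices, and let p be a shortest v-w-path in G. Then there exists an independent set R ⊆ V(G) such that (i) the bipartite subgraph of G consisting of all edges with one endpoint in R and one in V∖R is connected, and (ii) the path p alternates between R and V∖R; moreover one may prescribe whether v ∈ R or v ∈ V∖R. -/
open Finset

/-- The bipartite subgraph `G(R, V∖R)` consisting of the edges of `G` with exactly one
endpoint in `R`. -/
def bipartiteBetween {V : Type*} (G : SimpleGraph V) (R : Set V) : SimpleGraph V where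
  Adj a b := G.Adj a b ∧ ((a ∈ R ∧ b ∉ R) ∨ (a ∉ R ∧ b ∈ R))
  symm := by
    constructor
    intro a b h
    exact ⟨h.1.symm, h.2.elim (fun h' => Or.inr ⟨h'.2, h'.1⟩) (fun h' => Or.inl ⟨h'.2, h'.1⟩)⟩
  loopless := by
    constructor
    intro a h
    exact h.2.elim (fun h' => h'.2 h'.1) (fun h' => h'.1 h'.2)

/-! Colour the vertices of `p` by the parity of their distance from `v`. Since `p` is a shortest
path, this distance is injective on `p`, so two adjacent vertices of `p` have distances differing
by exactly one: the colour class `R₀` is independent and every edge between vertices of `p`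
crosses it. Then grow the region `S ⊇ p` greedily, keeping `R ⊆ S` independent and `G(R, S∖R)`
connected on `S`: a new neighbour `u` of `S` goes to `V∖R` if it has a neighbour in `R`, and to
`R` otherwise, and in both cases it gets a crossing edge into `S`. -/

namespace SimpleGraph

variable {V : Type*} {G : SimpleGraph V} {u v w x : V}

theorem Walk.dist_getVert_of_length_eq_dist (p : G.Walk v w) (hp : p.length = G.dist v w)
    {i : ℕ} (hi : i ≤ p.length) : G.dist v (p.getVert i) = i := by
  have hv : G.dist v (p.getVert i) ≤ i := by
    simpa [hi] using dist_le (p.take i)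
  have hw : G.dist (p.getVert i) w ≤ p.length - i := by
    simpa using dist_le (p.drop i)
  have := (p.drop i).reachable.dist_triangle_right v
  lia

theorem Walk.injOn_dist_support (p : G.Walk v w) (hp : p.length = G.dist v w) :
    Set.InjOn (G.dist v) {x | x ∈ p.support} := by
  intro x hx y hy hxy
  obtain ⟨i, rfl, hi⟩ := mem_support_iff_exists_getVert.mp hx
  obtain ⟨j, rfl, hj⟩ := mem_support_iff_exists_getVert.mp hy
  simp only [p.dist_getVert_of_length_eq_dist hp hi, p.dist_getVert_of_length_eq_dist hp hj] at hxy
  rw [hxy]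

theorem Adj.even_dist_iff_not_even_dist {a b : V} (hab : G.Adj a b)
    (hne : G.dist v a ≠ G.dist v b) : Even (G.dist v a) ↔ ¬ Even (G.dist v b) := by
  rcases hab.diff_dist_adj (u := v) with h | h | h
  · exact absurd h.symm hne
  · rw [h, Nat.even_add_one, not_not]
  · have : G.dist v a = G.dist v b + 1 := by lia
    rw [this, Nat.even_add_one]

theorem Walk.reachable_of_mem_support {H : SimpleGraph V} (p : G.Walk u w)
    (hH : ∀ a ∈ p.support, ∀ b ∈ p.support, G.Adj a b → H.Adj a b) (hx : x ∈ p.support) :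
    H.Reachable u x := by
  classical
  refine ⟨(p.takeUntil x hx).transfer H fun e he => ?_⟩
  replace he := p.edges_takeUntil_subset_edges hx he
  induction e using Sym2.ind with
  | h a b =>
    exact hH a (p.fst_mem_support_of_mem_edges he) b (p.snd_mem_support_of_mem_edges he)
      (p.adj_of_mem_edges he)

end SimpleGraph

section Extension

variable {V : Type*} {G : SimpleGraph V}

theorem bipartiteBetween_adj {R : Set V} {a b : V} :
    (bipartiteBetween G R).Adj a b ↔ G.Adj a b ∧ (a ∈ R ↔ b ∉ R) := by
  simp only [bipartiteBetween]
  tauto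

def bipartiteBetweenOn (G : SimpleGraph V) (R S : Set V) : SimpleGraph V where
  Adj a b := a ∈ S ∧ b ∈ S ∧ (bipartiteBetween G R).Adj a b
  symm := ⟨fun _ _ h => ⟨h.2.1, h.1, h.2.2.symm⟩⟩
  loopless := ⟨fun _ h => (bipartiteBetween G R).loopless.irrefl _ h.2.2⟩

theorem bipartiteBetweenOn_le (R S : Set V) : bipartiteBetweenOn G R S ≤ bipartiteBetween G R :=
  fun _ _ h => h.2.2

theorem bipartiteBetweenOn_mono {R R' S S' : Set V} (hS : S ⊆ S')
    (hR : ∀ x ∈ S, x ∈ R' ↔ x ∈ R) : bipartiteBetweenOn G R S ≤ bipartiteBetweenOn G R' S' := by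
  rintro a b ⟨ha, hb, hab⟩
  rw [bipartiteBetween_adj, ← hR a ha, ← hR b hb, ← bipartiteBetween_adj] at hab
  exact ⟨hS ha, hS hb, hab⟩

structure IsConnectedSplit (G : SimpleGraph V) (v : V) (S : Finset V) (R : Set V) : Prop where
  base_mem : v ∈ S
  subset : R ⊆ S
  isIndepSet : G.IsIndepSet R
  reachable : ∀ x ∈ S, (bipartiteBetweenOn G R S).Reachable v x

namespace IsConnectedSplit

variable [DecidableEq V] {v : V} {S : Finset V} {R : Set V}

theorem insert_of_adj (h : IsConnectedSplit G v S R) {u : V} (hu : u ∉ S) {R' : Set V}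
    (hR : ∀ x ∈ S, x ∈ R' ↔ x ∈ R) (hR' : R' ⊆ insert u S) (hind : G.IsIndepSet R')
    {y : V} (hy : y ∈ S) (hyu : (bipartiteBetween G R').Adj y u) :
    IsConnectedSplit G v (insert u S) R' := by
  have hmono := bipartiteBetweenOn_mono (G := G) (coe_subset.mpr (subset_insert u S)) hR
  refine ⟨mem_insert_of_mem h.base_mem, by simpa using hR', hind, fun x hx => ?_⟩
  rcases mem_insert.mp hx with rfl | hx
  · have hyu' : (bipartiteBetweenOn G R' (insert x S : Finset V)).Adj y x :=
      ⟨by simp [hy], by simp, hyu⟩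
    exact ((h.reachable y hy).mono hmono).trans hyu'.reachable
  · exact (h.reachable x hx).mono hmono

/-- A vertex `u` just outside `S` joins `V∖R` if it has a neighbour in `R`, and `R` otherwise. -/
theorem exists_insert (hG : G.Connected) (h : IsConnectedSplit G v S R) {t : V} (ht : t ∉ S) :
    ∃ u ∉ S, ∃ R' : Set V, (∀ x ∈ S, x ∈ R' ↔ x ∈ R) ∧ IsConnectedSplit G v (insert u S) R' := by
  obtain ⟨q⟩ := hG.preconnected v t
  obtain ⟨⟨⟨s, u⟩, hsu⟩, -, hs, hu⟩ := q.exists_boundary_dart (S : Set V) h.base_mem ht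
  have hs : s ∈ S := hs
  have hu : u ∉ S := hu
  have huR : u ∉ R := fun hu' => hu (h.subset hu')
  refine ⟨u, hu, ?_⟩
  by_cases hr : ∃ r ∈ R, G.Adj r u
  · obtain ⟨r, hr, hru⟩ := hr
    refine ⟨R, fun _ _ => Iff.rfl, h.insert_of_adj hu (fun _ _ => Iff.rfl) ?_ h.isIndepSet
      (h.subset hr) (bipartiteBetween_adj.mpr ⟨hru, by simp [hr, huR]⟩)⟩
    exact h.subset.trans (by simp)
  · push Not at hr
    have hagree : ∀ x ∈ S, x ∈ insert u R ↔ x ∈ R := fun x hx => by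
      simp [show x ≠ u by rintro rfl; exact hu hx]
    have hsR : s ∉ insert u R := by
      rw [hagree s hs]
      exact fun hsR => hr s hsR hsu
    refine ⟨insert u R, hagree, h.insert_of_adj hu hagree (Set.insert_subset_insert h.subset)
      (h.isIndepSet.insert fun r hr' _ => ⟨fun hur => hr r hr' hur.symm, hr r hr'⟩) hs
      (bipartiteBetween_adj.mpr ⟨hsu, by simp [hsR]⟩)⟩

theorem exists_connected_extension [Fintype V] (hG : G.Connected) {S : Finset V} {R : Set V}
    (h : IsConnectedSplit G v S R) :
    ∃ R' : Set V, (∀ x ∈ S, x ∈ R' ↔ x ∈ R) ∧ G.IsIndepSet R' ∧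
      (bipartiteBetween G R').Connected := by
  by_cases hS : ∀ x, x ∈ S
  · refine ⟨R, fun _ _ => Iff.rfl, h.isIndepSet,
      (SimpleGraph.connected_iff_exists_forall_reachable _).mpr ⟨v, fun x => ?_⟩⟩
    exact (h.reachable x (hS x)).mono (bipartiteBetweenOn_le _ _)
  push Not at hS
  obtain ⟨t, ht⟩ := hS
  obtain ⟨u, hu, R₁, hR₁, h₁⟩ := h.exists_insert hG ht
  have : #(Sᶜ.erase u) < #Sᶜ := card_erase_lt_of_mem (mem_compl.mpr hu)
  obtain ⟨R', hR', hind, hconn⟩ := h₁.exists_connected_extension hG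
  exact ⟨R', fun x hx => (hR' x (mem_insert_of_mem hx)).trans (hR₁ x hx), hind, hconn⟩
termination_by #Sᶜ

end IsConnectedSplit

end Extension

/-- for a connected graph `G`, vertices `v, w` and a shortest `v`-`w`-path `p`,
there is an independent set `R` such that the bipartite subgraph `G(R, V∖R)` is connected and
`p` alternates between `R` and `V∖R`, where one may prescribe whether `v ∈ R`. -/
theorem stmt1 {V : Type*} [Fintype V] (G : SimpleGraph V)
    (hG : G.Connected) (v w : V) (p : G.Walk v w)
    (hshort : p.length = G.dist v w) (c : Bool) :
    ∃ R : Set V,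
      (∀ a ∈ R, ∀ b ∈ R, ¬ G.Adj a b) ∧
      (bipartiteBetween G R).Connected ∧
      (∀ i : ℕ, ∀ h : i + 1 < p.support.length,
        (p.support.get ⟨i, by omega⟩ ∈ R ↔ p.support.get ⟨i + 1, h⟩ ∉ R)) ∧
      (v ∈ R ↔ c = true) := by
  classical
  set R₀ : Set V := {x | x ∈ p.support ∧ (Even (G.dist v x) ↔ c = true)}
  have hcut : ∀ a ∈ p.support, ∀ b ∈ p.support, G.Adj a b → (a ∈ R₀ ↔ b ∉ R₀) := by
    intro a ha b hb hab
    have hne : G.dist v a ≠ G.dist v b := fun h => hab.ne (p.injOn_dist_support hshort ha hb h)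
    simp only [R₀, Set.mem_ofPred_eq, ha, hb, true_and, hab.even_dist_iff_not_even_dist hne]
    tauto
  have hsplit : IsConnectedSplit G v p.support.toFinset R₀ :=
    { base_mem := by simp
      subset := fun x hx => by simpa using hx.1
      isIndepSet := fun a ha b hb _ hab => (hcut a ha.1 b hb.1 hab).mp ha hb
      reachable := fun x hx => p.reachable_of_mem_support
        (fun a ha b hb hab =>
          ⟨by simpa, by simpa, bipartiteBetween_adj.mpr ⟨hab, hcut a ha b hb hab⟩⟩)
        (by simpa using hx) }
  obtain ⟨R, hRR₀, hR, hconn⟩ := hsplit.exists_connected_extension hG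
  have hRR₀ : ∀ x ∈ p.support, x ∈ R ↔ x ∈ R₀ := fun x hx => hRR₀ x (by simpa)
  refine ⟨R, fun a ha b hb hab => hR ha hb hab.ne hab, hconn, fun i hi => ?_, ?_⟩
  · simp only [List.get_eq_getElem]
    rw [hRR₀ _ (List.getElem_mem _), hRR₀ _ (List.getElem_mem _)]
    exact hcut _ (List.getElem_mem _) _ (List.getElem_mem _) (p.isChain_adj_support.getElem i hi)
  · simp [hRR₀ v p.start_mem_support, R₀]
end

section
/- Let G be a finite simple graph, C = (S,T) a maximum cut of G, F a subset of the edges inside S together with the edges inside T, and σ an orientation of F. Construct the directed multigraph network G_{C,F,σ}: take vertex set V(G) plus a source s and sink t; for each edge {u,v} of the cut E(S,T) insert arcs (u,v) and (v,u), each with capacity 1; for each edge {u,v} ∈ F oriented as (u,v) in σ, insert arcs (s,u) and (v,t), each with capacity 1 (not inserting (u,v) itself). Then G_{C,F,σ} admits an s-t-flow of value |F|. -/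
/-!
Put the flow on the cut edges as a skew-symmetric unit flow and add the arcs of `F` one at a
time, each time augmenting along a residual path from its tail to its head (Ford–Fulkerson).
If no such path exists, the set `R` of vertices reachable from the tail is left only by saturated
cut arcs, so more arcs of `F` than cut edges leave `R`. Since the arcs of `F` join vertices on the
same side, moving the vertices of `R` to the other side would then increase the cut.
-/

open Finset

/-- The number of (ordered, with the `S`-endpoint first) cut edges of the cut `(S, Sᶜ)`. -/
def cutSize {V : Type*} [Fintype V] [DecidableEq V] (G : SimpleGraph V) [DecidableRel G.Adj]
    (S : Finset V) : ℕ :=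
  (Finset.univ.filter (fun p : V × V => G.Adj p.1 p.2 ∧ p.1 ∈ S ∧ p.2 ∉ S)).card

lemma Finset.card_filter_eq_add_card_filter {α : Type*} {s : Finset α} (P Q : α → Prop)
    [DecidablePred P] [DecidablePred Q] :
    #{x ∈ s | P x} = #{x ∈ s | P x ∧ Q x} + #{x ∈ s | P x ∧ ¬Q x} := by
  rw [← filter_filter, ← filter_filter, card_filter_add_card_filter_not]

section ArcNetOut

variable {V : Type*} [DecidableEq V]

def arcNetOut (A : Finset (V × V)) (w : V) : ℤ := #{e ∈ A | e.1 = w} - #{e ∈ A | e.2 = w}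

lemma arcNetOut_insert {A : Finset (V × V)} {e : V × V} (he : e ∉ A) :
    arcNetOut (insert e A) = arcNetOut A + Pi.single e.1 1 - Pi.single e.2 1 := by
  ext w
  have hcard (p : V × V → Prop) [DecidablePred p] :
      #(insert e {e ∈ A | p e}) = #{e ∈ A | p e} + 1 :=
    card_insert_of_notMem fun h => he (mem_filter.1 h).1
  by_cases h1 : e.1 = w <;> by_cases h2 : e.2 = w <;>
    simp [arcNetOut, filter_insert, h1, h2, eq_comm (a := w), hcard] <;> ring

lemma sum_arcNetOut_le (A : Finset (V × V)) (R : Finset V) :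
    ∑ w ∈ R, arcNetOut A w ≤ #{e ∈ A | e.1 ∈ R ∧ e.2 ∉ R} := by
  have hout := sum_card_fiberwise_eq_card_filter A R Prod.fst
  have hin := sum_card_fiberwise_eq_card_filter A R Prod.snd
  have hsplit := card_filter_eq_add_card_filter (s := A) (fun e => e.1 ∈ R) (fun e => e.2 ∈ R)
  have hinner : #{e ∈ A | e.1 ∈ R ∧ e.2 ∈ R} ≤ #{e ∈ A | e.2 ∈ R} :=
    card_le_card fun e he => by simp only [mem_filter] at he ⊢; tauto
  simp only [arcNetOut, sum_sub_distrib, ← Nat.cast_sum, hout, hin]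
  omega

end ArcNetOut

namespace SimpleGraph

variable {V : Type*}

def cutGraph (G : SimpleGraph V) (S : Finset V) : SimpleGraph V where
  Adj x y := G.Adj x y ∧ (x ∈ S ↔ y ∉ S)
  symm := ⟨fun _ _ h => ⟨h.1.symm, by tauto⟩⟩
  loopless := ⟨fun _ h => G.irrefl h.1⟩

instance [DecidableEq V] (G : SimpleGraph V) [DecidableRel G.Adj] (S : Finset V) :
    DecidableRel (G.cutGraph S).Adj :=
  fun x y => inferInstanceAs (Decidable (G.Adj x y ∧ (x ∈ S ↔ y ∉ S)))

end SimpleGraph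

section MaxCut

variable {V : Type*} [Fintype V] [DecidableEq V]

lemma card_filter_crossing_eq_two_mul (Q : V × V → Prop) [DecidablePred Q]
    (hQ : ∀ p, Q p.swap ↔ Q p) (X : Finset V) :
    #{p | Q p ∧ (p.1 ∈ X ↔ p.2 ∉ X)} = 2 * #{p | Q p ∧ p.1 ∈ X ∧ p.2 ∉ X} := by
  have hfst : #{p | (Q p ∧ (p.1 ∈ X ↔ p.2 ∉ X)) ∧ p.1 ∈ X} =
      #{p | Q p ∧ p.1 ∈ X ∧ p.2 ∉ X} := by
    congr 1; ext p; simp only [mem_filter, mem_univ, true_and]; tauto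
  have hsnd : #{p | (Q p ∧ (p.1 ∈ X ↔ p.2 ∉ X)) ∧ p.1 ∉ X} =
      #{p | Q p ∧ p.1 ∈ X ∧ p.2 ∉ X} := by
    refine card_equiv (Equiv.prodComm V V) fun p => ?_
    have := hQ p
    simp only [mem_filter, mem_univ, true_and, Equiv.prodComm_apply, Prod.fst_swap,
      Prod.snd_swap] at this ⊢
    tauto
  rw [card_filter_eq_add_card_filter _ (fun p => p.1 ∈ X), hfst, hsnd, two_mul]

variable (G : SimpleGraph V) [DecidableRel G.Adj]

lemma two_mul_cutSize (X : Finset V) :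
    2 * cutSize G X = #{p : V × V | G.Adj p.1 p.2 ∧ (p.1 ∈ X ↔ p.2 ∉ X)} :=
  (card_filter_crossing_eq_two_mul _ (fun _ => G.adj_comm _ _) X).symm

/-- Moving the vertices of `R` to the other side exchanges the roles of the cut and the
same-side edges leaving `R`. -/
lemma card_sameSide_le_card_cut_of_forall_cutSize_le {S : Finset V}
    (hmax : ∀ S', cutSize G S' ≤ cutSize G S) (R : Finset V) :
    #{p : V × V | G.Adj p.1 p.2 ∧ ¬(p.1 ∈ S ↔ p.2 ∉ S) ∧ p.1 ∈ R ∧ p.2 ∉ R} ≤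
      #{p : V × V | G.Adj p.1 p.2 ∧ (p.1 ∈ S ↔ p.2 ∉ S) ∧ p.1 ∈ R ∧ p.2 ∉ R} := by
  have hsame := card_filter_crossing_eq_two_mul
    (fun p : V × V => G.Adj p.1 p.2 ∧ ¬(p.1 ∈ S ↔ p.2 ∉ S))
    (fun p => by simp only [Prod.fst_swap, Prod.snd_swap, G.adj_comm]; tauto) R
  have hcut := card_filter_crossing_eq_two_mul
    (fun p : V × V => G.Adj p.1 p.2 ∧ (p.1 ∈ S ↔ p.2 ∉ S))
    (fun p => by simp only [Prod.fst_swap, Prod.snd_swap, G.adj_comm]; tauto) R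
  have hS := two_mul_cutSize G S
  have hS' := two_mul_cutSize G (symmDiff S R)
  rw [card_filter_eq_add_card_filter _ (fun p => p.1 ∈ R ↔ p.2 ∉ R)] at hS hS'
  have hflip_in :
      #{p : V × V | (G.Adj p.1 p.2 ∧
        (p.1 ∈ symmDiff S R ↔ p.2 ∉ symmDiff S R)) ∧ (p.1 ∈ R ↔ p.2 ∉ R)} =
      #{p : V × V | (G.Adj p.1 p.2 ∧ ¬(p.1 ∈ S ↔ p.2 ∉ S)) ∧ (p.1 ∈ R ↔ p.2 ∉ R)} := by
    congr 1; ext p; simp only [mem_filter, mem_univ, true_and, mem_symmDiff]; tauto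
  have hflip_out :
      #{p : V × V | (G.Adj p.1 p.2 ∧
        (p.1 ∈ symmDiff S R ↔ p.2 ∉ symmDiff S R)) ∧ ¬(p.1 ∈ R ↔ p.2 ∉ R)} =
      #{p : V × V | (G.Adj p.1 p.2 ∧ (p.1 ∈ S ↔ p.2 ∉ S)) ∧ ¬(p.1 ∈ R ↔ p.2 ∉ R)} := by
    congr 1; ext p; simp only [mem_filter, mem_univ, true_and, mem_symmDiff]; tauto
  have := hmax (symmDiff S R)
  simp only [and_assoc] at hsame hcut hS hS' hflip_in hflip_out
  omega

lemma card_out_le_card_cutGraph_out_of_forall_cutSize_le {S : Finset V}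
    (hmax : ∀ S', cutSize G S' ≤ cutSize G S) {A : Finset (V × V)}
    (hA : ∀ e ∈ A, G.Adj e.1 e.2 ∧ ((e.1 ∈ S ∧ e.2 ∈ S) ∨ (e.1 ∉ S ∧ e.2 ∉ S)))
    (R : Finset V) :
    #{e ∈ A | e.1 ∈ R ∧ e.2 ∉ R} ≤
      #{p : V × V | (G.cutGraph S).Adj p.1 p.2 ∧ p.1 ∈ R ∧ p.2 ∉ R} := by
  refine (card_le_card fun e he => ?_).trans
    ((card_sameSide_le_card_cut_of_forall_cutSize_le G hmax R).trans_eq ?_)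
  · have := hA e (mem_filter.1 he).1
    simp only [mem_filter, mem_univ, true_and] at he ⊢
    tauto
  · simp only [SimpleGraph.cutGraph, and_assoc]

end MaxCut

namespace SimpleGraph

variable {V : Type*} (H : SimpleGraph V)

/-- A flow through the edges of `H`, each usable in both directions with capacity `1`, in the
skew-symmetric convention: `g x y` is the flow from `x` to `y` minus the flow from `y` to `x`. -/
structure IsUnitFlow (g : V → V → ℤ) : Prop where
  skew : ∀ x y, g y x = -g x y
  le_one : ∀ x y, g x y ≤ 1
  eq_zero : ∀ x y, ¬H.Adj x y → g x y = 0

def Residual (g : V → V → ℤ) (x y : V) : Prop := H.Adj x y ∧ g x y < 1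

variable {H}

section Fintype

variable [Fintype V]

def netOut (g : V → V → ℤ) (w : V) : ℤ := ∑ y, g w y

lemma IsUnitFlow.sum_toNat_sub_sum_toNat {g : V → V → ℤ} (hg : H.IsUnitFlow g) (w : V) :
    ∑ y, ((g w y).toNat : ℤ) - ∑ y, ((g y w).toNat : ℤ) = netOut g w := by
  simp only [netOut, hg.skew w, ← sum_sub_distrib, Int.toNat_sub_toNat_neg]

end Fintype

variable [DecidableEq V]

def pushArc (g : V → V → ℤ) (x y : V) (a b : V) : ℤ :=
  g a b + (if a = x ∧ b = y then 1 else 0) - (if a = y ∧ b = x then 1 else 0)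

lemma pushArc_of_ne {g : V → V → ℤ} {x y a b : V} (ha : a ≠ x) (hb : b ≠ x) :
    pushArc g x y a b = g a b := by
  simp [pushArc, ha, hb]

lemma IsUnitFlow.pushArc {g : V → V → ℤ} (hg : H.IsUnitFlow g) {x y : V}
    (hxy : H.Residual g x y) : H.IsUnitFlow (pushArc g x y) where
  skew a b := by
    have := hg.skew a b
    unfold SimpleGraph.pushArc
    grind
  le_one a b := by
    have := hg.le_one a b
    have := hxy.2
    unfold SimpleGraph.pushArc
    grind
  eq_zero a b hab := by
    have h1 : ¬(a = x ∧ b = y) := by rintro ⟨rfl, rfl⟩; exact hab hxy.1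
    have h2 : ¬(a = y ∧ b = x) := by rintro ⟨rfl, rfl⟩; exact hab hxy.1.symm
    simp [SimpleGraph.pushArc, h1, h2, hg.eq_zero a b hab]

variable [Fintype V]

lemma netOut_pushArc (g : V → V → ℤ) (x y : V) :
    netOut (pushArc g x y) = netOut g + Pi.single x 1 - Pi.single y 1 := by
  ext w
  simp [netOut, pushArc, sum_add_distrib, sum_sub_distrib, ite_and, Pi.single_apply]

/-- After augmenting along the first arc, the rest of the path still consists of residual arcs
unless it returns to its start; in that case the loop is cut out first. -/
theorem IsUnitFlow.exists_netOut_eq_of_isChain :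
    ∀ {g : V → V → ℤ} (_ : H.IsUnitFlow g) {u : V} {l : List V},
      (u :: l).IsChain (H.Residual g) →
      ∃ g', H.IsUnitFlow g' ∧ netOut g' =
        netOut g + Pi.single u 1 - Pi.single ((u :: l).getLast (List.cons_ne_nil _ _)) 1
  | g, hg, u, [], _ => ⟨g, hg, by simp⟩
  | g, hg, u, x :: l, hc => by
    by_cases hu : u ∈ x :: l
    · obtain ⟨s, t, hst⟩ := List.append_of_mem hu
      have hc' : (u :: t).IsChain (H.Residual g) := by
        rw [hst, ← List.cons_append] at hc
        exact hc.right_of_append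
      have : t.length ≤ l.length := by
        have := congrArg List.length hst
        simp only [List.length_cons, List.length_append] at this
        omega
      obtain ⟨g', hg', hnet⟩ := hg.exists_netOut_eq_of_isChain hc'
      exact ⟨g', hg', by simp [hnet, hst]⟩
    · rw [List.isChain_cons_cons] at hc
      have hc' : (x :: l).IsChain (H.Residual (SimpleGraph.pushArc g u x)) := by
        refine hc.2.imp_of_mem_imp fun p q hp hq hpq => ?_
        rwa [Residual, pushArc_of_ne (ne_of_mem_of_not_mem hp hu) (ne_of_mem_of_not_mem hq hu)]
      obtain ⟨g', hg', hnet⟩ := (hg.pushArc hc.1).exists_netOut_eq_of_isChain hc'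
      refine ⟨g', hg', ?_⟩
      rw [hnet, netOut_pushArc, List.getLast_cons_cons]
      abel
termination_by _ _ _ l => l.length

variable [DecidableRel H.Adj]

lemma IsUnitFlow.sum_netOut_eq_card_of_closed {g : V → V → ℤ} (hg : H.IsUnitFlow g)
    {R : Finset V} (hR : ∀ x ∈ R, ∀ y ∉ R, ¬H.Residual g x y) :
    ∑ w ∈ R, netOut g w = #{p : V × V | H.Adj p.1 p.2 ∧ p.1 ∈ R ∧ p.2 ∉ R} := by
  have hinside : ∑ w ∈ R, ∑ y ∈ R, g w y = 0 := by
    have : ∑ w ∈ R, ∑ y ∈ R, g w y = ∑ y ∈ R, ∑ w ∈ R, -g y w := by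
      rw [sum_comm]
      exact sum_congr rfl fun y _ => sum_congr rfl fun w _ => hg.skew y w
    simp only [sum_neg_distrib] at this
    linarith
  have hsaturated : ∀ x ∈ R, ∀ y ∈ Rᶜ, g x y = if H.Adj x y then 1 else 0 := by
    intro x hx y hy
    split_ifs with hxy
    · have := hR x hx y (mem_compl.1 hy)
      have := hg.le_one x y
      simp only [Residual, hxy, true_and, not_lt] at *
      omega
    · exact hg.eq_zero x y hxy
  calc ∑ w ∈ R, netOut g w
        = ∑ w ∈ R, ∑ y ∈ R, g w y + ∑ w ∈ R, ∑ y ∈ Rᶜ, g w y := by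
        simp only [netOut, ← sum_add_distrib, sum_add_sum_compl]
    _ = ∑ p ∈ R ×ˢ Rᶜ, if H.Adj p.1 p.2 then 1 else 0 := by
        rw [hinside, zero_add, sum_product]
        exact sum_congr rfl fun x hx => sum_congr rfl (hsaturated x hx)
    _ = _ := by
        rw [sum_boole]
        congr 2
        ext p
        simp only [mem_filter, mem_product, mem_compl, mem_univ, true_and]
        tauto

theorem exists_isUnitFlow_netOut_eq_arcNetOut (A : Finset (V × V))
    (hA : ∀ R : Finset V,
      #{e ∈ A | e.1 ∈ R ∧ e.2 ∉ R} ≤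
        #{p : V × V | H.Adj p.1 p.2 ∧ p.1 ∈ R ∧ p.2 ∉ R}) :
    ∃ g, H.IsUnitFlow g ∧ netOut g = arcNetOut A := by
  induction A using Finset.induction_on with
  | empty =>
    exact ⟨0, ⟨fun _ _ => by simp, fun _ _ => by simp, fun _ _ _ => rfl⟩,
      by ext; simp [netOut, arcNetOut]⟩
  | @insert e A he ih =>
    obtain ⟨g, hg, hnet⟩ := ih fun R =>
      (card_le_card (filter_subset_filter _ (subset_insert e A))).trans (hA R)
    obtain ⟨u, v⟩ := e
    by_cases hreach : Relation.ReflTransGen (H.Residual g) u v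
    · obtain ⟨l, hchain, hlast⟩ := List.exists_isChain_cons_of_relationReflTransGen hreach
      obtain ⟨g', hg', hnet'⟩ := hg.exists_netOut_eq_of_isChain hchain
      exact ⟨g', hg', by rw [hnet', hnet, hlast, arcNetOut_insert he]⟩
    · classical
      set R : Finset V := {x | Relation.ReflTransGen (H.Residual g) u x}
      have huR : u ∈ R := mem_filter.2 ⟨mem_univ _, .refl⟩
      have hvR : v ∉ R := fun h => hreach (mem_filter.1 h).2
      have hclosed : ∀ x ∈ R, ∀ y ∉ R, ¬H.Residual g x y := fun x hx y hy hxy =>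
        hy (mem_filter.2 ⟨mem_univ _, (mem_filter.1 hx).2.tail hxy⟩)
      have hflow := hg.sum_netOut_eq_card_of_closed hclosed
      have hdemand := sum_arcNetOut_le (insert (u, v) A) R
      rw [arcNetOut_insert he, ← hnet] at hdemand
      simp only [Pi.add_apply, Pi.sub_apply, sum_add_distrib, sum_sub_distrib,
        sum_pi_single', if_pos huR, if_neg hvR, hflow] at hdemand
      have := hA R
      omega

end SimpleGraph

theorem stmt3_general {V : Type*} [Fintype V] [DecidableEq V] (G : SimpleGraph V) [DecidableRel G.Adj]
    (S : Finset V)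
    (hmax : ∀ S' : Finset V, cutSize G S' ≤ cutSize G S)
    (A : Finset (V × V))
    (hF : ∀ e ∈ A, G.Adj e.1 e.2 ∧ ((e.1 ∈ S ∧ e.2 ∈ S) ∨ (e.1 ∉ S ∧ e.2 ∉ S))) :
    ∃ fs ft fc : V × V → ℕ,
      (∀ e, fs e ≤ 1) ∧ (∀ e, ft e ≤ 1) ∧ (∀ e, fc e ≤ 1) ∧
      (∀ e, e ∉ A → fs e = 0) ∧ (∀ e, e ∉ A → ft e = 0) ∧
      (∀ e : V × V, ¬(G.Adj e.1 e.2 ∧ (e.1 ∈ S ↔ e.2 ∉ S)) → fc e = 0) ∧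
      (∀ v : V,
        (∑ e ∈ A.filter (fun e => e.1 = v), fs e) + (∑ u : V, fc (u, v)) =
        (∑ e ∈ A.filter (fun e => e.2 = v), ft e) + (∑ u : V, fc (v, u))) ∧
      (∑ e ∈ A, fs e) = A.card := by
  obtain ⟨g, hg, hnet⟩ := (G.cutGraph S).exists_isUnitFlow_netOut_eq_arcNetOut A
    (card_out_le_card_cutGraph_out_of_forall_cutSize_le G hmax hF)
  have hcount (s : Finset (V × V)) (hs : s ⊆ A) :
      ∑ e ∈ s, (if e ∈ A then 1 else 0) = #s := by
    rw [sum_boole, filter_true_of_mem hs, Nat.cast_id]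
  refine ⟨fun e => if e ∈ A then 1 else 0, fun e => if e ∈ A then 1 else 0,
    fun e => (g e.1 e.2).toNat, fun e => by by_cases e ∈ A <;> simp [*],
    fun e => by by_cases e ∈ A <;> simp [*],
    fun e => by simpa using hg.le_one e.1 e.2, fun e he => by simp [he],
    fun e he => by simp [he], fun e he => by simp [hg.eq_zero e.1 e.2 he],
    fun v => ?_, hcount A subset_rfl⟩
  rw [hcount _ (filter_subset _ _), hcount _ (filter_subset _ _)]
  have key := hg.sum_toNat_sub_sum_toNat v
  rw [congrFun hnet v, arcNetOut, ← Nat.cast_sum, ← Nat.cast_sum] at key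
  dsimp only
  omega

/-- given a maximum cut `C = (S, T)` of `G`, a set `F ⊆ E(S) ∪ E(T)` with an
orientation `σ` (encoded as the set `A` of oriented pairs), the auxiliary network `G_{C,F,σ}`
(with a source arc `s → u` and a sink arc `v → t` for each `(u,v) ∈ A`, and arcs of capacity 1
in both directions for every cut edge) admits an `s`-`t`-flow of value `|F|`.  The flow is
encoded by `fs` (flows on the source arcs, indexed by the corresponding element of `A`),
`ft` (flows on the sink arcs), and `fc` (flows on the cut arcs). -/
theorem stmt3 {V : Type*} [Fintype V] [DecidableEq V] (G : SimpleGraph V) [DecidableRel G.Adj]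
    (S : Finset V)
    (hmax : ∀ S' : Finset V, cutSize G S' ≤ cutSize G S)
    (A : Finset (V × V))
    (hF : ∀ e ∈ A, G.Adj e.1 e.2 ∧ ((e.1 ∈ S ∧ e.2 ∈ S) ∨ (e.1 ∉ S ∧ e.2 ∉ S)))
    (hσ : ∀ e ∈ A, (e.2, e.1) ∉ A) :
    ∃ fs ft fc : V × V → ℕ,
      (∀ e, fs e ≤ 1) ∧ (∀ e, ft e ≤ 1) ∧ (∀ e, fc e ≤ 1) ∧
      (∀ e, e ∉ A → fs e = 0) ∧ (∀ e, e ∉ A → ft e = 0) ∧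
      (∀ e : V × V, ¬(G.Adj e.1 e.2 ∧ (e.1 ∈ S ↔ e.2 ∉ S)) → fc e = 0) ∧
      (∀ v : V,
        (∑ e ∈ A.filter (fun e => e.1 = v), fs e) + (∑ u : V, fc (u, v)) =
        (∑ e ∈ A.filter (fun e => e.2 = v), ft e) + (∑ u : V, fc (v, u))) ∧
      (∑ e ∈ A, fs e) = A.card :=
  stmt3_general G S hmax A hF
end

section
/- Let G be a finite connected bipartite graph with parts B and R, and let α: B → ℤ satisfy α(v) ∈ {2·deg(v)−1, 2·deg(v), 2·deg(v)+1} for all v ∈ B. Let R' ⊆ R be such that |R'| + Σ_{v ∈ B} α(v) is even. Then there exists an edge-weighting ω: E(G) → {1,2,3} such that s_ω(v) is even for all v ∈ R∖R', s_ω(v) is odd for all v ∈ R', and s_ω(v) = α(v) for all v ∈ B. -/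
/-!
Modulo 2 only the set `J` of edges of odd weight (`1` or `3`) matters, and the conditions ask
that `J` have odd degree exactly at the vertices of `T = R' ∪ {v ∈ B | α v odd}`. Since `G` is connected, such a `T`-join exists as soon as `|T|` is
even, which is the parity hypothesis: over `𝔽₂`, the boundary of the edges of a walk from `a` to
`b` is `a + b`, and these sums span the vectors of even weight. At `v ∈ B` the target
`α v - 2 deg v ∈ {-1, 0, 1}` has the parity of the `J`-degree of `v`, so it is reached by giving
the `J`-edges at `v` the weights `1` and `3` in suitable numbers. Every edge has exactly one
endpoint in `B`, so these local choices are independent.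
-/

open Finset

/-- The weighted degree of `v`. -/
def wdeg {V : Type*} [Fintype V] [DecidableEq V] (G : SimpleGraph V) [DecidableRel G.Adj]
    (ω : V → V → ℕ) (v : V) : ℕ :=
  ∑ u ∈ G.neighborFinset v, ω v u

lemma exists_weights_with_parity_sum_eq {ι : Type*} [DecidableEq ι] (p : ι → ZMod 2)
    (N : Finset ι) (t : ℤ) (hpar : (t : ZMod 2) = ∑ i ∈ N, p i) (ht : |t - 2 * #N| ≤ 1) :
    ∃ c : ι → ℕ, (∀ i ∈ N, c i ∈ ({1, 2, 3} : Set ℕ) ∧ (c i : ZMod 2) = p i) ∧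
      ∑ i ∈ N, (c i : ℤ) = t := by
  induction N using Finset.induction_on generalizing t with
  | empty =>
    obtain ⟨k, rfl⟩ : Even t := ZMod.intCast_eq_zero_iff_even.mp (by simpa using hpar)
    refine ⟨0, by simp, ?_⟩
    simp only [card_empty, CharP.cast_eq_zero, mul_zero, sub_zero, abs_le] at ht
    simp only [sum_empty]
    omega
  | @insert i N hi ih =>
    -- `ci` keeps the remaining target within `1` of `2 * #N`.
    set ci : ℕ := if p i = 0 then 2 else if 2 * #N + 2 < t then 3 else 1 with hci
    have hp : p i = 0 ∨ p i = 1 := by generalize p i = x; decide +revert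
    have hci_mem : ci ∈ ({1, 2, 3} : Set ℕ) := by simp only [hci]; split_ifs <;> simp
    have hci_par : (ci : ZMod 2) = p i := by
      simp only [hci]; split_ifs <;> rcases hp with h | h <;> simp_all <;> decide
    rw [sum_insert hi] at hpar
    rw [card_insert_of_notMem hi, abs_le] at ht
    obtain ⟨c, hc, hsum⟩ := ih (t - ci) (by push_cast; rw [hpar, hci_par]; ring) (by
      rw [abs_le]
      simp only [hci]
      split_ifs <;> push_cast <;> omega)
    have hc_eq : ∀ j ∈ N, Function.update c i ci j = c j := fun j hj =>
      Function.update_of_ne (ne_of_mem_of_not_mem hj hi) _ _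
    refine ⟨Function.update c i ci, fun j hj => ?_, ?_⟩
    · rcases mem_insert.mp hj with rfl | hj
      · simpa using ⟨hci_mem, hci_par⟩
      · rw [hc_eq j hj]
        exact hc j hj
    · rw [sum_insert hi, Function.update_self, sum_congr rfl fun j hj => by rw [hc_eq j hj], hsum]
      ring

namespace SimpleGraph

variable {V : Type*} [Fintype V] (G : SimpleGraph V) [DecidableRel G.Adj]

/-- The boundary map of `G` from edge chains to vertex chains over `𝔽₂`; values of an edge
function off the edge set of `G` are ignored. -/
def parityBoundary : (Sym2 V → ZMod 2) →ₗ[ZMod 2] V → ZMod 2 where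
  toFun f v := ∑ u ∈ G.neighborFinset v, f s(v, u)
  map_add' f g := by ext v; simp [sum_add_distrib]
  map_smul' c f := by ext v; simp [mul_sum]

lemma parityBoundary_apply (f : Sym2 V → ZMod 2) (v : V) :
    G.parityBoundary f v = ∑ u ∈ G.neighborFinset v, f s(v, u) := rfl

variable [DecidableEq V]

lemma parityBoundary_single_of_adj {a b : V} (hab : G.Adj a b) :
    G.parityBoundary (Pi.single s(a, b) 1) = Pi.single a 1 + Pi.single b 1 := by
  ext v
  simp only [parityBoundary_apply, Pi.add_apply, Pi.single_apply, Sym2.eq_iff]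
  by_cases hva : v = a
  · subst hva
    simp [hab.ne, hab]
  · by_cases hvb : v = b
    · subst hvb
      simp [hab.symm, hva]
    · simp [hva, hvb]

lemma single_add_single_mem_range_parityBoundary {a b : V} (h : G.Reachable a b) :
    Pi.single a 1 + Pi.single b 1 ∈ LinearMap.range G.parityBoundary := by
  have add_self : ∀ x : V → ZMod 2, x + x = 0 := fun x => by
    rw [← two_smul (ZMod 2), show (2 : ZMod 2) = 0 from rfl, zero_smul]
  obtain ⟨w⟩ := h
  induction w with
  | nil =>
    rw [add_self]
    exact zero_mem _
  | @cons a b c hab _ ih =>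
    have := add_mem (LinearMap.mem_range_self G.parityBoundary (Pi.single s(a, b) 1)) ih
    rwa [parityBoundary_single_of_adj G hab, add_assoc, ← add_assoc (Pi.single b 1), add_self,
      zero_add] at this

lemma mem_range_parityBoundary_of_sum_eq_zero (hG : G.Connected) {g : V → ZMod 2}
    (hg : ∑ v, g v = 0) : g ∈ LinearMap.range G.parityBoundary := by
  obtain ⟨v₀⟩ := hG.nonempty
  have hdecomp : g = ∑ v, g v • (Pi.single v 1 + Pi.single v₀ 1) := by
    simp_rw [smul_add, sum_add_distrib, ← sum_smul, hg, zero_smul, add_zero]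
    ext x
    simp [Pi.single_apply]
  rw [hdecomp]
  exact Submodule.sum_mem _ fun v _ =>
    Submodule.smul_mem _ _ (G.single_add_single_mem_range_parityBoundary (hG.preconnected v v₀))

lemma exists_weights_with_parityBoundary_sum_eq (f : Sym2 V → ZMod 2) (B : Finset V)
    (α : V → ℤ) (hpar : ∀ v ∈ B, (α v : ZMod 2) = G.parityBoundary f v)
    (hα : ∀ v ∈ B, |α v - 2 * G.degree v| ≤ 1) :
    ∃ c : V → V → ℕ, ∀ v ∈ B,
      (∀ u ∈ G.neighborFinset v, c v u ∈ ({1, 2, 3} : Set ℕ) ∧ (c v u : ZMod 2) = f s(v, u)) ∧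
        ∑ u ∈ G.neighborFinset v, (c v u : ℤ) = α v := by
  have hlocal := fun v (hv : v ∈ B) =>
    exists_weights_with_parity_sum_eq (fun u => f s(v, u)) (G.neighborFinset v) (α v)
      (hpar v hv) (by rw [card_neighborFinset_eq_degree]; exact hα v hv)
  choose c hc using hlocal
  exact ⟨fun v => if hv : v ∈ B then c v hv else 0, fun v hv => by simpa [hv] using hc v hv⟩

end SimpleGraph

section crossingWeight

variable {V : Type*} [DecidableEq V] (B : Finset V) (c : V → V → ℕ)

def crossingWeight (a b : V) : ℕ :=
  if a ∈ B ∧ b ∉ B then c a b else if b ∈ B ∧ a ∉ B then c b a else 0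

lemma crossingWeight_comm (a b : V) : crossingWeight B c a b = crossingWeight B c b a := by
  unfold crossingWeight
  split_ifs <;> tauto

variable {B c}

lemma crossingWeight_of_mem_of_notMem {a b : V} (ha : a ∈ B) (hb : b ∉ B) :
    crossingWeight B c a b = c a b := by
  simp [crossingWeight, ha, hb]

lemma crossingWeight_of_notMem_of_mem {a b : V} (ha : a ∉ B) (hb : b ∈ B) :
    crossingWeight B c a b = c b a := by
  simp [crossingWeight, ha, hb]

end crossingWeight

section wdeg

variable {V : Type*} [Fintype V] [DecidableEq V] {G : SimpleGraph V} [DecidableRel G.Adj]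
  {B : Finset V} {c : V → V → ℕ}

lemma crossingWeight_mem_of_adj (hside : ∀ a b, G.Adj a b → (a ∈ B ↔ b ∉ B)) {S : Set ℕ}
    (hc : ∀ v ∈ B, ∀ u ∈ G.neighborFinset v, c v u ∈ S) {a b : V} (hab : G.Adj a b) :
    crossingWeight B c a b ∈ S := by
  by_cases ha : a ∈ B
  · rw [crossingWeight_of_mem_of_notMem ha ((hside a b hab).mp ha)]
    exact hc a ha b ((G.mem_neighborFinset a b).mpr hab)
  · have hb : b ∈ B := not_not.mp (mt (hside a b hab).mpr ha)
    rw [crossingWeight_of_notMem_of_mem ha hb]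
    exact hc b hb a ((G.mem_neighborFinset b a).mpr hab.symm)

lemma wdeg_crossingWeight_of_mem (hside : ∀ a b, G.Adj a b → (a ∈ B ↔ b ∉ B)) {v : V}
    (hv : v ∈ B) : wdeg G (crossingWeight B c) v = ∑ u ∈ G.neighborFinset v, c v u :=
  sum_congr rfl fun u hu => crossingWeight_of_mem_of_notMem hv
    ((hside v u ((G.mem_neighborFinset v u).mp hu)).mp hv)

lemma wdeg_crossingWeight_cast_of_notMem (hside : ∀ a b, G.Adj a b → (a ∈ B ↔ b ∉ B))
    {f : Sym2 V → ZMod 2} (hc : ∀ v ∈ B, ∀ u ∈ G.neighborFinset v, (c v u : ZMod 2) = f s(v, u))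
    {v : V} (hv : v ∉ B) : (wdeg G (crossingWeight B c) v : ZMod 2) = G.parityBoundary f v := by
  rw [wdeg, G.parityBoundary_apply, Nat.cast_sum]
  refine sum_congr rfl fun u hu => ?_
  have hvu := (G.mem_neighborFinset v u).mp hu
  have hu : u ∈ B := not_not.mp (mt (hside v u hvu).mpr hv)
  rw [crossingWeight_of_notMem_of_mem hv hu, hc u hu v ((G.mem_neighborFinset u v).mpr hvu.symm),
    Sym2.eq_swap]

end wdeg

/-- let `G` be connected and bipartite with parts `B` and `R`, let
`α : B → ℤ` with `α(v) ∈ {2deg(v)−1, 2deg(v), 2deg(v)+1}`, and let `R' ⊆ R` with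
`|R'| + Σ_{v∈B} α(v)` even.  Then some edge-weighting `ω : E → {1,2,3}` has `s_ω` even on
`R∖R'`, odd on `R'`, and `s_ω(v) = α(v)` on `B`. -/
theorem stmt4 {V : Type*} [Fintype V] [DecidableEq V] (G : SimpleGraph V) [DecidableRel G.Adj]
    (hG : G.Connected) (B R : Finset V)
    (hpart : ∀ v : V, (v ∈ B ∧ v ∉ R) ∨ (v ∈ R ∧ v ∉ B))
    (hbip : ∀ a b : V, G.Adj a b → ((a ∈ B ∧ b ∈ R) ∨ (a ∈ R ∧ b ∈ B)))
    (α : V → ℤ)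
    (hα : ∀ v ∈ B, α v ∈
      ({2 * (G.degree v : ℤ) - 1, 2 * (G.degree v : ℤ), 2 * (G.degree v : ℤ) + 1} : Set ℤ))
    (R' : Finset V) (hR' : R' ⊆ R)
    (hparity : Even ((R'.card : ℤ) + ∑ v ∈ B, α v)) :
    ∃ ω : V → V → ℕ,
      (∀ a b, ω a b = ω b a) ∧
      (∀ a b, G.Adj a b → ω a b ∈ ({1, 2, 3} : Set ℕ)) ∧
      (∀ v ∈ R \ R', Even (wdeg G ω v)) ∧
      (∀ v ∈ R', Odd (wdeg G ω v)) ∧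
      (∀ v ∈ B, (wdeg G ω v : ℤ) = α v) := by
  have hRB : ∀ v ∈ R, v ∉ B := fun v hv => ((hpart v).resolve_left fun h => h.2 hv).2
  have hside : ∀ a b, G.Adj a b → (a ∈ B ↔ b ∉ B) := fun a b hab => by
    rcases hbip a b hab with ⟨ha, hb⟩ | ⟨ha, hb⟩
    · exact iff_of_true ha (hRB b hb)
    · exact iff_of_false (hRB a ha) (not_not_intro hb)
  obtain ⟨f, hf⟩ := G.mem_range_parityBoundary_of_sum_eq_zero hG
    (g := fun v => (if v ∈ R' then 1 else 0) + if v ∈ B then (α v : ZMod 2) else 0) (by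
      simp only [sum_add_distrib, sum_ite_mem, univ_inter, sum_const, nsmul_eq_mul, mul_one]
      exact_mod_cast ZMod.intCast_eq_zero_iff_even.mpr hparity)
  obtain ⟨c, hc⟩ := G.exists_weights_with_parityBoundary_sum_eq f B α
    (fun v hv => by simp [hf, hv, show v ∉ R' from fun h => hRB v (hR' h) hv]) (fun v hv => by
      have := hα v hv
      simp only [Set.mem_insert_iff, Set.mem_singleton_iff] at this
      rw [abs_le]
      omega)
  have hR : ∀ v ∈ R, (wdeg G (crossingWeight B c) v : ZMod 2) = if v ∈ R' then 1 else 0 :=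
    fun v hv => by
      rw [wdeg_crossingWeight_cast_of_notMem hside (fun u hu w hw => ((hc u hu).1 w hw).2)
        (hRB v hv), hf]
      simp [hRB v hv]
  refine ⟨crossingWeight B c, crossingWeight_comm B c,
    fun a b => crossingWeight_mem_of_adj hside fun v hv u hu => ((hc v hv).1 u hu).1,
    fun v hv => ?_, fun v hv => ?_, fun v hv => ?_⟩
  · rw [mem_sdiff] at hv
    rw [← ZMod.natCast_eq_zero_iff_even, hR v hv.1, if_neg hv.2]
  · rw [← ZMod.natCast_eq_one_iff_odd, hR v (hR' hv), if_pos hv]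
  · rw [wdeg_crossingWeight_of_mem hside hv, Nat.cast_sum]
    exact (hc v hv).2
end

section
/- Let G be a finite connected bipartite graph with parts B and R, let α: B → ℤ satisfy α(v) ∈ {2·deg(v)−1, 2·deg(v), 2·deg(v)+1} for all v ∈ B, let R' ⊆ R with |R'| + Σ_{v∈B} α(v) even, and let p = (v_1,…,v_k) be a fixed path in G with k ≥ 3 and v_1, v_k ∈ B. Then there is an edge-weighting ω: E → {1,2,3} with: s_ω even on R∖R', s_ω odd on R', s_ω(v) = α(v) for all v ∈ B, ω({v_1,v_2}) ≠ 1 if α(v_1) = 2·deg(v_1)+1 and ω({v_1,v_2}) ≠ 3 otherwise, ω({v_{i−1},v_i}) + ω({v_i,v_{i+1}}) ∈ {3,4,5} for every internal path vertex v_i ∈ B, and ω({v_{k−1},v_k}) ≠ 1 if α(v_k) = 2·deg(v_k)+1 and ω({v_{k−1},v_k}) ≠ 3 otherwise. -/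
open Finset

set_option linter.unusedSectionVars false


namespace Stmt5Aux


variable {V : Type*} [Fintype V] [DecidableEq V] (G : SimpleGraph V) [DecidableRel G.Adj]

/-- parity degree sum -/
def psum (σ : V → V → ZMod 2) (v : V) : ZMod 2 := ∑ u ∈ G.neighborFinset v, σ v u

def single (a b : V) : V → V → ZMod 2 := fun x y =>
  if (x = a ∧ y = b) ∨ (x = b ∧ y = a) then 1 else 0

lemma single_symm (a b x y : V) : single a b x y = single a b y x := by
  unfold single
  by_cases h : (x = a ∧ y = b) ∨ (x = b ∧ y = a) <;> [rw [if_pos h, if_pos (h.symm.imp And.symm And.symm)]; rw [if_neg h, if_neg (fun hc => h (hc.symm.imp And.symm And.symm))]]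

lemma single_adj {a b : V} (hab : G.Adj a b) (x y : V) : single a b x y ≠ 0 → G.Adj x y := by
  unfold single
  by_cases h : (x = a ∧ y = b) ∨ (x = b ∧ y = a)
  · intro _
    rcases h with ⟨h1, h2⟩ | ⟨h1, h2⟩ <;> subst h1 <;> subst h2
    · exact hab
    · exact hab.symm
  · rw [if_neg h]; simp

lemma psum_single {a b : V} (hab : G.Adj a b) (x : V) :
    psum G (single a b) x = (if x = a then 1 else 0) + (if x = b then 1 else 0) := by
  have hne : a ≠ b := hab.ne
  by_cases hxa : x = a
  · subst hxa
    rw [if_pos rfl, if_neg hne]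
    unfold psum single
    have : ∀ u ∈ G.neighborFinset x, (if (x = x ∧ u = b) ∨ (x = b ∧ u = x) then (1 : ZMod 2) else 0)
        = if u = b then 1 else 0 := by
      intro u _
      by_cases hu : u = b <;> simp [hu, hne]
    rw [Finset.sum_congr rfl this, Finset.sum_ite_eq' (G.neighborFinset x) b (fun _ => (1 : ZMod 2))]
    simp [hab]
  · by_cases hxb : x = b
    · subst hxb
      rw [if_neg hxa, if_pos rfl]
      unfold psum single
      have : ∀ u ∈ G.neighborFinset x, (if (x = a ∧ u = x) ∨ (x = x ∧ u = a) then (1 : ZMod 2) else 0)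
          = if u = a then 1 else 0 := by
        intro u _
        by_cases hu : u = a <;> simp [hu, hxa]
      rw [Finset.sum_congr rfl this, Finset.sum_ite_eq' (G.neighborFinset x) a (fun _ => (1 : ZMod 2))]
      simp [hab.symm]
    · rw [if_neg hxa, if_neg hxb]
      unfold psum single
      rw [Finset.sum_eq_zero (fun u _ => by
        rw [if_neg]
        rintro (⟨h1, _⟩ | ⟨h1, _⟩) <;> [exact hxa h1; exact hxb h1])]
      norm_num

lemma psum_add (σ τ : V → V → ZMod 2) (x : V) :
    psum G (fun a b => σ a b + τ a b) x = psum G σ x + psum G τ x := by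
  unfold psum; rw [Finset.sum_add_distrib]

def toggle : {u v : V} → G.Walk u v → V → V → ZMod 2
  | _, _, SimpleGraph.Walk.nil => fun _ _ => 0
  | _, _, @SimpleGraph.Walk.cons _ _ a b _ _ w => fun x y => single a b x y + toggle w x y

lemma toggle_symm {u v : V} (w : G.Walk u v) (x y : V) : toggle G w x y = toggle G w y x := by
  induction w with
  | nil => rfl
  | cons h w ih => simp only [toggle, single_symm, ih]

lemma toggle_adj {u v : V} (w : G.Walk u v) (x y : V) : toggle G w x y ≠ 0 → G.Adj x y := by
  induction w with
  | nil => simp [toggle]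
  | @cons a b c h w ih =>
    simp only [toggle]
    intro hne
    by_cases h1 : single a b x y = 0
    · exact ih (by rwa [h1, zero_add] at hne)
    · exact single_adj G h x y h1

lemma psum_toggle {u v : V} (w : G.Walk u v) (x : V) :
    psum G (toggle G w) x = (if x = u then 1 else 0) + (if x = v then 1 else 0) := by
  induction w with
  | nil =>
    rename_i a
    have h0 : psum G (toggle G (SimpleGraph.Walk.nil : G.Walk a a)) x = 0 := by
      unfold psum toggle; simp
    rw [h0]
    by_cases h : x = a <;> simp [h] <;> decide
  | @cons a b c h w ih =>
    have : psum G (toggle G (SimpleGraph.Walk.cons h w)) x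
        = psum G (single a b) x + psum G (toggle G w) x := psum_add G _ _ x
    rw [this, psum_single G h x, ih]
    generalize (if x = a then (1 : ZMod 2) else 0) = t1
    generalize (if x = b then (1 : ZMod 2) else 0) = t2
    generalize (if x = c then (1 : ZMod 2) else 0) = t3
    revert t1 t2 t3
    decide

lemma joinExists (hG : G.Connected) : ∀ (n : ℕ) (D : Finset V), D.card = n → Even n →
    ∃ σ : V → V → ZMod 2, (∀ x y, σ x y = σ y x) ∧ (∀ x y, σ x y ≠ 0 → G.Adj x y) ∧
      ∀ x, psum G σ x = if x ∈ D then 1 else 0 := by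
  intro n
  induction n using Nat.strong_induction_on with
  | _ n ih =>
    intro D hcard heven
    rcases Finset.eq_empty_or_nonempty D with h | ⟨u, hu⟩
    · refine ⟨fun _ _ => 0, fun _ _ => rfl, fun x y h0 => absurd rfl h0, fun x => ?_⟩
      subst h
      simp [psum]
    · have h1 : 1 ≤ D.card := Finset.card_pos.mpr ⟨u, hu⟩
      have h2 : 2 ≤ D.card := by
        rcases (hcard ▸ heven) with ⟨m, hm⟩
        omega
      obtain ⟨v, hv⟩ : (D.erase u).Nonempty := by
        rw [← Finset.card_pos, Finset.card_erase_of_mem hu]; omega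
      have hvu : v ≠ u := Finset.ne_of_mem_erase hv
      have hvD : v ∈ D := Finset.mem_of_mem_erase hv
      set D' := (D.erase u).erase v with hD'
      have hcard' : D'.card = n - 2 := by
        rw [hD', Finset.card_erase_of_mem hv, Finset.card_erase_of_mem hu, hcard]
        omega
      obtain ⟨σ₀, hs1, hs2, hs3⟩ := ih (n - 2) (by omega) D' hcard' (by rcases heven with ⟨m, hm⟩; exact ⟨m - 1, by omega⟩)
      have hw : G.Reachable u v := hG.preconnected u v
      let w := hw.some
      refine ⟨fun x y => σ₀ x y + toggle G w x y, ?_, ?_, ?_⟩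
      · intro x y; dsimp only; rw [hs1 x y, toggle_symm]
      · intro x y hne
        dsimp only at hne
        by_cases h0 : σ₀ x y = 0
        · exact toggle_adj G w x y (by rwa [h0, zero_add] at hne)
        · exact hs2 x y h0
      · intro x
        rw [show psum G (fun x y => σ₀ x y + toggle G w x y) x = _ from psum_add G σ₀ (toggle G w) x, hs3, psum_toggle]
        have hxD' : x ∈ D' ↔ x ∈ D ∧ x ≠ u ∧ x ≠ v := by
          rw [hD']
          simp only [Finset.mem_erase]
          tauto
        by_cases hxu : x = u
        · subst hxu
          have : x ∉ D' := by rw [hxD']; tauto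
          simp [this, hu, Ne.symm hvu]
        · by_cases hxv : x = v
          · subst hxv
            have : x ∉ D' := by rw [hxD']; tauto
            simp [this, hvD, hxu]
          · have : x ∈ D' ↔ x ∈ D := by rw [hxD']; tauto
            simp [hxu, hxv, this]


end Stmt5Aux

namespace Stmt5Aux
variable {V : Type*} [DecidableEq V]


lemma signs_base (S : Finset V) (d : ℤ) (hle : |d| ≤ (S.card : ℤ)) (hpar : Even (d + S.card)) :
    ∃ f : V → ℤ, (∀ u ∈ S, f u = 1 ∨ f u = -1) ∧ ∑ u ∈ S, f u = d := by
  rw [abs_le] at hle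
  obtain ⟨m, hm⟩ := hpar
  have hm0 : 0 ≤ m := by omega
  have hn : m.toNat ≤ S.card := by omega
  obtain ⟨T, hTS, hT⟩ := Finset.exists_subset_card_eq hn
  refine ⟨fun u => if u ∈ T then 1 else -1, fun u _ => by by_cases h : u ∈ T <;> simp [h], ?_⟩
  have h1 : ∀ u ∈ S, (if u ∈ T then (1:ℤ) else -1) = (if u ∈ T then (2:ℤ) else 0) - 1 := by
    intro u _; by_cases h : u ∈ T <;> simp [h]
  rw [Finset.sum_congr rfl h1, Finset.sum_sub_distrib, Finset.sum_ite_mem,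
    Finset.inter_eq_right.mpr hTS, Finset.sum_const, Finset.sum_const, hT]
  have : (m.toNat : ℤ) = m := by omega
  simp only [nsmul_eq_mul, mul_one]
  omega

lemma signs (S F : Finset V) (hFS : F ⊆ S) (g : V → ℤ) (hg : ∀ u ∈ F, g u = 1 ∨ g u = -1)
    (d : ℤ) (hle : |d - ∑ u ∈ F, g u| ≤ (S.card : ℤ) - F.card) (hpar : Even (d + S.card)) :
    ∃ f : V → ℤ, (∀ u ∈ S, f u = 1 ∨ f u = -1) ∧ (∀ u ∈ F, f u = g u) ∧ ∑ u ∈ S, f u = d := by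
  have hFcard : F.card ≤ S.card := Finset.card_le_card hFS
  have hcard : ((S \ F).card : ℤ) = (S.card : ℤ) - F.card := by
    rw [Finset.card_sdiff_of_subset hFS]; omega
  have hgpar : Even (∑ u ∈ F, g u + F.card) := by
    have h2 : ∑ u ∈ F, (g u + 1) = ∑ u ∈ F, g u + F.card := by
      rw [Finset.sum_add_distrib]; simp
    rw [← h2]
    apply Finset.even_sum
    intro u hu
    rcases hg u hu with h | h <;> rw [h]
    · exact ⟨1, by norm_num⟩
    · exact ⟨0, by norm_num⟩
  obtain ⟨f₀, hf1, hf2⟩ := signs_base (S \ F) (d - ∑ u ∈ F, g u)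
    (by rw [hcard]; exact hle)
    (by
      rw [hcard]
      obtain ⟨m1, hm1⟩ := hpar
      obtain ⟨m2, hm2⟩ := hgpar
      exact ⟨m1 - m2, by omega⟩)
  refine ⟨fun u => if u ∈ F then g u else f₀ u, ?_, ?_, ?_⟩
  · intro u hu
    by_cases h : u ∈ F
    · simpa [h] using hg u h
    · simpa [h] using hf1 u (Finset.mem_sdiff.mpr ⟨hu, h⟩)
  · intro u hu; simp [hu]
  · rw [← Finset.sum_inter_add_sum_sdiff S F (fun u => if u ∈ F then g u else f₀ u)]
    rw [Finset.inter_eq_right.mpr hFS]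
    rw [Finset.sum_congr rfl (fun u hu => if_pos hu),
      Finset.sum_congr rfl (fun u (hu : u ∈ S \ F) => if_neg (Finset.mem_sdiff.mp hu).2)]
    rw [hf2]
    ring


end Stmt5Aux

/-- the bipartite weighting lemma with the extra conditions along a fixed
path `p = (p 0, …, p (k-1))` with `k ≥ 3` and both endpoints in `B`. -/
theorem stmt5 {V : Type*} [Fintype V] [DecidableEq V] (G : SimpleGraph V) [DecidableRel G.Adj]
    (hG : G.Connected) (B R : Finset V)
    (hpart : ∀ v : V, (v ∈ B ∧ v ∉ R) ∨ (v ∈ R ∧ v ∉ B))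
    (hbip : ∀ a b : V, G.Adj a b → ((a ∈ B ∧ b ∈ R) ∨ (a ∈ R ∧ b ∈ B)))
    (α : V → ℤ)
    (hα : ∀ v ∈ B, α v ∈
      ({2 * (G.degree v : ℤ) - 1, 2 * (G.degree v : ℤ), 2 * (G.degree v : ℤ) + 1} : Set ℤ))
    (R' : Finset V) (hR' : R' ⊆ R)
    (hparity : Even ((R'.card : ℤ) + ∑ v ∈ B, α v))
    (k : ℕ) (hk : 3 ≤ k) (p : ℕ → V)
    (hinj : ∀ i < k, ∀ j < k, p i = p j → i = j)
    (hadj : ∀ i, i + 1 < k → G.Adj (p i) (p (i + 1)))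
    (hp0 : p 0 ∈ B) (hpk : p (k - 1) ∈ B) :
    ∃ ω : V → V → ℕ,
      (∀ a b, ω a b = ω b a) ∧
      (∀ a b, G.Adj a b → ω a b ∈ ({1, 2, 3} : Set ℕ)) ∧
      (∀ v ∈ R \ R', Even (wdeg G ω v)) ∧
      (∀ v ∈ R', Odd (wdeg G ω v)) ∧
      (∀ v ∈ B, (wdeg G ω v : ℤ) = α v) ∧
      (α (p 0) = 2 * (G.degree (p 0) : ℤ) + 1 → ω (p 0) (p 1) ≠ 1) ∧
      (α (p 0) ≠ 2 * (G.degree (p 0) : ℤ) + 1 → ω (p 0) (p 1) ≠ 3) ∧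
      (∀ i, 0 < i → i + 1 < k → p i ∈ B →
        ω (p (i - 1)) (p i) + ω (p i) (p (i + 1)) ∈ ({3, 4, 5} : Set ℕ)) ∧
      (α (p (k - 1)) = 2 * (G.degree (p (k - 1)) : ℤ) + 1 → ω (p (k - 2)) (p (k - 1)) ≠ 1) ∧
      (α (p (k - 1)) ≠ 2 * (G.degree (p (k - 1)) : ℤ) + 1 → ω (p (k - 2)) (p (k - 1)) ≠ 3) := by
  classical
  open Stmt5Aux in
  -- part facts
  have hBR : ∀ v ∈ B, v ∉ R := fun v hv =>
    (hpart v).elim (fun h => h.2) (fun h => absurd hv h.2)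
  have hRB : ∀ v ∈ R, v ∉ B := fun v hv =>
    (hpart v).elim (fun h => absurd hv h.2) (fun h => h.2)
  have hadjBR : ∀ x y, G.Adj x y → x ∈ B → y ∈ R := fun x y hxy hx =>
    (hbip x y hxy).elim (fun h => h.2) (fun h => absurd hx (hRB x h.1))
  have hadjRB : ∀ x y, G.Adj x y → y ∈ B → x ∈ R := fun x y hxy hy =>
    (hbip x y hxy).elim (fun h => absurd hy (hRB y h.2)) (fun h => h.1)
  have hz : ∀ c : ZMod 2, c = 0 ∨ c = 1 := by decide
  have evenNat : ∀ n : ℕ, Even n ↔ ((n : ZMod 2) = 0) := by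
    intro n
    rw [ZMod.natCast_eq_zero_iff, even_iff_two_dvd]
  have evenInt : ∀ n : ℤ, Even n ↔ ((n : ZMod 2) = 0) := by
    intro n
    rw [ZMod.intCast_zmod_eq_zero_iff_dvd, even_iff_two_dvd]
    norm_num
  set D : Finset V := (B.filter fun v => ¬ Even (α v)) ∪ R' with hD
  have hDdisj : Disjoint (B.filter fun v => ¬ Even (α v)) R' := by
    rw [Finset.disjoint_left]
    intro a ha haR'
    exact hBR a (Finset.mem_filter.mp ha).1 (hR' haR')
  have hcastB : (((B.filter fun v => ¬ Even (α v)).card : ZMod 2))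
      = ((∑ v ∈ B, α v : ℤ) : ZMod 2) := by
    rw [← Finset.sum_boole]
    push_cast
    apply Finset.sum_congr rfl
    intro v _
    by_cases h : Even (α v)
    · rw [if_neg (by simpa using h), ← (evenInt (α v)).mp h]
    · rw [if_pos (by simpa using h)]
      rcases hz ((α v : ZMod 2)) with h0 | h1
      · exact absurd ((evenInt (α v)).mpr h0) h
      · rw [h1]
  have hDeven : Even D.card := by
    rw [evenNat, hD, Finset.card_union_of_disjoint hDdisj]
    push_cast
    rw [hcastB]
    have := (evenInt _).mp hparity
    push_cast at this
    push_cast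
    linear_combination this
  obtain ⟨σ, hσsymm, hσadj, hσpsum⟩ := Stmt5Aux.joinExists G hG D.card D rfl hDeven
  set Sv : V → Finset V := fun v => (G.neighborFinset v).filter fun u => σ v u = 1 with hSv
  have hmemS : ∀ v u, σ v u = 1 → u ∈ Sv v := by
    intro v u h
    refine Finset.mem_filter.mpr ⟨?_, h⟩
    exact (SimpleGraph.mem_neighborFinset G v u).mpr (hσadj v u (by rw [h]; decide))
  have hcardS : ∀ v, (((Sv v).card : ZMod 2)) = Stmt5Aux.psum G σ v := by
    intro v
    rw [hSv]
    rw [← Finset.sum_boole]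
    apply Finset.sum_congr rfl
    intro u _
    rcases hz (σ v u) with h | h <;> simp [h]
  have hd3 : ∀ v ∈ B, α v - 2 * (G.degree v : ℤ) = 1 ∨ α v - 2 * (G.degree v : ℤ) = 0
      ∨ α v - 2 * (G.degree v : ℤ) = -1 := by
    intro v hv
    have := hα v hv
    simp only [Set.mem_insert_iff, Set.mem_singleton_iff] at this
    omega
  have hparw : ∀ v ∈ B, Even (α v - 2 * (G.degree v : ℤ) + ((Sv v).card : ℤ)) := by
    intro v hv
    rw [evenInt]
    push_cast
    rw [hcardS, hσpsum]
    have hvD : (if v ∈ D then (1 : ZMod 2) else 0) = ((α v : ZMod 2)) := by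
      have hmem : v ∈ D ↔ ¬ Even (α v) := by
        rw [hD, Finset.mem_union, Finset.mem_filter]
        constructor
        · rintro (⟨_, h⟩ | h)
          · exact h
          · exact absurd (hR' h) (hBR v hv)
        · exact fun h => Or.inl ⟨hv, h⟩
      by_cases h : Even (α v)
      · rw [if_neg (by rw [hmem]; exact fun hc => hc h), ← (evenInt (α v)).mp h]
      · rw [if_pos (hmem.mpr h)]
        rcases hz ((α v : ZMod 2)) with h0 | h1
        · exact absurd ((evenInt (α v)).mpr h0) h
        · rw [h1]
    rw [hvD]
    have h2 : (2 : ZMod 2) = 0 := rfl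
    ring_nf
    rw [h2]
    ring
  have key : ∀ v ∈ B, ∃ f : V → ℤ,
      (∀ u ∈ Sv v, f u = 1 ∨ f u = -1) ∧
      (∑ u ∈ Sv v, f u = α v - 2 * (G.degree v : ℤ)) ∧
      (v = p 0 → σ v (p 1) = 1 → f (p 1) = if α v = 2 * (G.degree v : ℤ) + 1 then 1 else -1) ∧
      (v = p (k - 1) → σ v (p (k - 2)) = 1 →
        f (p (k - 2)) = if α v = 2 * (G.degree v : ℤ) + 1 then 1 else -1) ∧
      (∀ i, 0 < i → i + 1 < k → v = p i → σ v (p (i - 1)) = 1 → σ v (p (i + 1)) = 1 →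
        f (p (i - 1)) = 1 ∧ f (p (i + 1)) = -1) := by
    intro v hv
    have hd := hd3 v hv
    have hpar := hparw v hv
    have hpar2 := Int.even_iff.mp hpar
    by_cases hv0 : v = p 0
    · have hnek : v ≠ p (k - 1) := by
        intro h
        have := hinj 0 (by omega) (k - 1) (by omega) (hv0.symm.trans h)
        omega
      have hnint : ∀ i, 0 < i → i + 1 < k → v ≠ p i := by
        intro i h1 h2 h
        have := hinj 0 (by omega) i (by omega) (hv0.symm.trans h)
        omega
      by_cases hσ1 : σ v (p 1) = 1
      · have hmem : p 1 ∈ Sv v := hmemS v (p 1) hσ1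
        have hc1 : 1 ≤ (Sv v).card := Finset.card_pos.mpr ⟨_, hmem⟩
        obtain ⟨f, hf1, hf2, hf3⟩ := Stmt5Aux.signs (Sv v) {p 1}
          (Finset.singleton_subset_iff.mpr hmem)
          (fun _ => if α v = 2 * (G.degree v : ℤ) + 1 then 1 else -1)
          (fun u _ => by by_cases h : α v = 2 * (G.degree v : ℤ) + 1 <;> simp [h])
          (α v - 2 * (G.degree v : ℤ))
          (by
            rw [Finset.sum_singleton, Finset.card_singleton, abs_le]
            by_cases h : α v = 2 * (G.degree v : ℤ) + 1
            · rw [if_pos h]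
              constructor <;> omega
            · rw [if_neg h]
              rcases hd with h1 | h1 | h1 <;> constructor <;> omega)
          hpar
        refine ⟨f, hf1, hf3, fun _ _ => hf2 (p 1) (Finset.mem_singleton_self _), ?_, ?_⟩
        · intro h _
          exact absurd h hnek
        · intro i h1 h2 h _ _
          exact absurd h (hnint i h1 h2)
      · obtain ⟨f, hf1, _, hf3⟩ := Stmt5Aux.signs (Sv v) ∅ (Finset.empty_subset _)
          (fun _ => 0) (fun u hu => absurd hu (Finset.notMem_empty u))
          (α v - 2 * (G.degree v : ℤ))
          (by
            rw [Finset.sum_empty, Finset.card_empty, abs_le]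
            constructor <;> (rcases hd with h1 | h1 | h1 <;> omega))
          hpar
        refine ⟨f, hf1, hf3, fun _ hc => absurd hc hσ1, ?_, ?_⟩
        · intro h _
          exact absurd h hnek
        · intro i h1 h2 h _ _
          exact absurd h (hnint i h1 h2)
    · by_cases hvk : v = p (k - 1)
      · have hnint : ∀ i, 0 < i → i + 1 < k → v ≠ p i := by
          intro i h1 h2 h
          have := hinj (k - 1) (by omega) i (by omega) (hvk.symm.trans h)
          omega
        by_cases hσ1 : σ v (p (k - 2)) = 1
        · have hmem : p (k - 2) ∈ Sv v := hmemS v (p (k - 2)) hσ1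
          have hc1 : 1 ≤ (Sv v).card := Finset.card_pos.mpr ⟨_, hmem⟩
          obtain ⟨f, hf1, hf2, hf3⟩ := Stmt5Aux.signs (Sv v) {p (k - 2)}
            (Finset.singleton_subset_iff.mpr hmem)
            (fun _ => if α v = 2 * (G.degree v : ℤ) + 1 then 1 else -1)
            (fun u _ => by by_cases h : α v = 2 * (G.degree v : ℤ) + 1 <;> simp [h])
            (α v - 2 * (G.degree v : ℤ))
            (by
              rw [Finset.sum_singleton, Finset.card_singleton, abs_le]
              by_cases h : α v = 2 * (G.degree v : ℤ) + 1
              · rw [if_pos h]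
                constructor <;> omega
              · rw [if_neg h]
                rcases hd with h1 | h1 | h1 <;> constructor <;> omega)
            hpar
          refine ⟨f, hf1, hf3, fun h _ => absurd h hv0,
            fun _ _ => hf2 (p (k - 2)) (Finset.mem_singleton_self _), ?_⟩
          intro i h1 h2 h _ _
          exact absurd h (hnint i h1 h2)
        · obtain ⟨f, hf1, _, hf3⟩ := Stmt5Aux.signs (Sv v) ∅ (Finset.empty_subset _)
            (fun _ => 0) (fun u hu => absurd hu (Finset.notMem_empty u))
            (α v - 2 * (G.degree v : ℤ))
            (by
              rw [Finset.sum_empty, Finset.card_empty, abs_le]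
              constructor <;> (rcases hd with h1 | h1 | h1 <;> omega))
            hpar
          refine ⟨f, hf1, hf3, fun h _ => absurd h hv0, fun _ hc => absurd hc hσ1, ?_⟩
          intro i h1 h2 h _ _
          exact absurd h (hnint i h1 h2)
      · by_cases hvint : ∃ i, 0 < i ∧ i + 1 < k ∧ v = p i
        · obtain ⟨i, hi0, hik, hvi⟩ := hvint
          have hii : ∀ j, 0 < j → j + 1 < k → v = p j → j = i := by
            intro j h1 h2 h
            exact hinj j (by omega) i (by omega) (h.symm.trans hvi)
          by_cases hσa : σ v (p (i - 1)) = 1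
          · by_cases hσb : σ v (p (i + 1)) = 1
            · have hne : p (i - 1) ≠ p (i + 1) := by
                intro h
                have := hinj (i - 1) (by omega) (i + 1) (by omega) h
                omega
              have hma : p (i - 1) ∈ Sv v := hmemS v _ hσa
              have hmb : p (i + 1) ∈ Sv v := hmemS v _ hσb
              have hsub : ({p (i - 1), p (i + 1)} : Finset V) ⊆ Sv v :=
                Finset.insert_subset hma (Finset.singleton_subset_iff.mpr hmb)
              have hc2 : 2 ≤ (Sv v).card := by
                have := Finset.card_le_card hsub
                rwa [Finset.card_pair hne] at this
              obtain ⟨f, hf1, hf2, hf3⟩ := Stmt5Aux.signs (Sv v) {p (i - 1), p (i + 1)}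
                hsub (fun u => if u = p (i - 1) then 1 else -1)
                (fun u _ => by by_cases h : u = p (i - 1) <;> simp [h])
                (α v - 2 * (G.degree v : ℤ))
                (by
                  rw [Finset.sum_pair hne, Finset.card_pair hne, if_pos rfl,
                    if_neg (Ne.symm hne), abs_le]
                  constructor <;> (rcases hd with h1 | h1 | h1 <;> omega))
                hpar
              refine ⟨f, hf1, hf3, fun h _ => absurd h hv0, fun h _ => absurd h hvk, ?_⟩
              intro j h1 h2 h _ _
              obtain rfl : j = i := hii j h1 h2 h
              constructor
              · rw [hf2 (p (j - 1)) (Finset.mem_insert_self _ _), if_pos rfl]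
              · rw [hf2 (p (j + 1))
                  (Finset.mem_insert_of_mem (Finset.mem_singleton_self _)), if_neg (Ne.symm hne)]
            · obtain ⟨f, hf1, _, hf3⟩ := Stmt5Aux.signs (Sv v) ∅ (Finset.empty_subset _)
                (fun _ => 0) (fun u hu => absurd hu (Finset.notMem_empty u))
                (α v - 2 * (G.degree v : ℤ))
                (by
                  rw [Finset.sum_empty, Finset.card_empty, abs_le]
                  constructor <;> (rcases hd with h1 | h1 | h1 <;> omega))
                hpar
              refine ⟨f, hf1, hf3, fun h _ => absurd h hv0, fun h _ => absurd h hvk, ?_⟩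
              intro j h1 h2 h _ hB2
              obtain rfl : j = i := hii j h1 h2 h
              exact absurd hB2 hσb
          · obtain ⟨f, hf1, _, hf3⟩ := Stmt5Aux.signs (Sv v) ∅ (Finset.empty_subset _)
              (fun _ => 0) (fun u hu => absurd hu (Finset.notMem_empty u))
              (α v - 2 * (G.degree v : ℤ))
              (by
                rw [Finset.sum_empty, Finset.card_empty, abs_le]
                constructor <;> (rcases hd with h1 | h1 | h1 <;> omega))
              hpar
            refine ⟨f, hf1, hf3, fun h _ => absurd h hv0, fun h _ => absurd h hvk, ?_⟩
            intro j h1 h2 h hA2 _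
            obtain rfl : j = i := hii j h1 h2 h
            exact absurd hA2 hσa
        · obtain ⟨f, hf1, _, hf3⟩ := Stmt5Aux.signs (Sv v) ∅ (Finset.empty_subset _)
            (fun _ => 0) (fun u hu => absurd hu (Finset.notMem_empty u))
            (α v - 2 * (G.degree v : ℤ))
            (by
              rw [Finset.sum_empty, Finset.card_empty, abs_le]
              constructor <;> (rcases hd with h1 | h1 | h1 <;> omega))
            hpar
          refine ⟨f, hf1, hf3, fun h _ => absurd h hv0, fun h _ => absurd h hvk, ?_⟩
          intro j h1 h2 h _ _
          exact absurd ⟨j, h1, h2, h⟩ hvint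
  have hspec := fun v (h : v ∈ B) => (key v h).choose_spec
  obtain ⟨εB, hεB1, hεB0⟩ : ∃ εB : V → V → ℤ,
      (∀ v u (h : v ∈ B), σ v u = 1 → εB v u = (key v h).choose u) ∧
      (∀ v u, ¬(v ∈ B ∧ σ v u = 1) → εB v u = 0) :=
    ⟨fun v u => if h : v ∈ B ∧ σ v u = 1 then (key v h.1).choose u else 0,
      fun v u h hσ => dif_pos ⟨h, hσ⟩, fun v u h => dif_neg h⟩
  have hval : ∀ x y, x ∈ B → σ x y = 1 → εB x y = 1 ∨ εB x y = -1 := by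
    intro x y hx hσ
    rw [hεB1 x y hx hσ]
    exact (hspec x hx).1 y (hmemS x y hσ)
  have hrange : ∀ x y, x ∈ B → εB x y = 0 ∨ εB x y = 1 ∨ εB x y = -1 := by
    intro x y hx
    by_cases hσ : σ x y = 1
    · exact Or.inr (hval x y hx hσ)
    · exact Or.inl (hεB0 x y (fun hc => hσ hc.2))
  obtain ⟨ω, hω1, hω2, hω3⟩ : ∃ ω : V → V → ℕ,
      (∀ x y, x ∈ B → y ∉ B → ω x y = (2 + εB x y).toNat) ∧
      (∀ x y, x ∉ B → y ∈ B → ω x y = (2 + εB y x).toNat) ∧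
      (∀ x y, ω x y = ω y x) := by
    refine ⟨fun x y => if x ∈ B ∧ y ∉ B then (2 + εB x y).toNat
      else if x ∉ B ∧ y ∈ B then (2 + εB y x).toNat else 2, ?_, ?_, ?_⟩
    · intro x y hx hy
      simp only [if_pos (And.intro hx hy)]
    · intro x y hx hy
      simp only [if_neg (fun hc : x ∈ B ∧ y ∉ B => hx hc.1), if_pos (And.intro hx hy)]
    · intro x y
      by_cases hx : x ∈ B <;> by_cases hy : y ∈ B <;> simp [hx, hy]
  have hcastω : ∀ v ∈ R, ((wdeg G ω v : ZMod 2)) = Stmt5Aux.psum G σ v := by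
    intro v hvR
    unfold wdeg Stmt5Aux.psum
    rw [Nat.cast_sum]
    apply Finset.sum_congr rfl
    intro u hu
    have hadjvu : G.Adj v u := (SimpleGraph.mem_neighborFinset G v u).mp hu
    have huB : u ∈ B := (hbip v u hadjvu).elim (fun h => absurd h.1 (hRB v hvR)) (fun h => h.2)
    rw [hω2 v u (hRB v hvR) huB]
    by_cases hσ : σ u v = 1
    · rw [hσsymm v u, hσ]
      rcases hval u v huB hσ with h | h <;> rw [h] <;> decide
    · have h0 : σ u v = 0 := (hz _).resolve_right hσ
      rw [hεB0 u v (fun hc => hσ hc.2), hσsymm v u, h0]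
      decide
  refine ⟨ω, hω3, ?_, ?_, ?_, ?_, ?_, ?_, ?_, ?_, ?_⟩
  · -- range
    intro a b hab
    simp only [Set.mem_insert_iff, Set.mem_singleton_iff]
    rcases hbip a b hab with ⟨ha, hb⟩ | ⟨ha, hb⟩
    · rw [hω1 a b ha (hRB b hb)]
      rcases hrange a b ha with h | h | h <;> rw [h] <;> omega
    · rw [hω2 a b (hRB a ha) hb]
      rcases hrange b a hb with h | h | h <;> rw [h] <;> omega
  · -- even on R \ R'
    intro v hv
    rw [Finset.mem_sdiff] at hv
    have hvD : v ∉ D := by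
      rw [hD, Finset.mem_union]
      rintro (h | h)
      · exact hRB v hv.1 (Finset.mem_filter.mp h).1
      · exact hv.2 h
    rw [evenNat, hcastω v hv.1, hσpsum, if_neg hvD]
  · -- odd on R'
    intro v hv
    have hvD : v ∈ D := by
      rw [hD]
      exact Finset.mem_union_right _ hv
    rcases Nat.even_or_odd (wdeg G ω v) with h | h
    · exfalso
      have h2 := (evenNat _).mp h
      rw [hcastω v (hR' hv), hσpsum, if_pos hvD] at h2
      exact absurd h2 (by decide)
    · exact h
  · -- exact value on B
    intro v hv
    unfold wdeg
    rw [Nat.cast_sum]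
    have hterm : ∀ u ∈ G.neighborFinset v, ((ω v u : ℤ)) = 2 + εB v u := by
      intro u hu
      have hadjvu : G.Adj v u := (SimpleGraph.mem_neighborFinset G v u).mp hu
      have huR : u ∈ R := hadjBR v u hadjvu hv
      rw [hω1 v u hv (hRB u huR)]
      exact Int.toNat_of_nonneg (by rcases hrange v u hv with h | h | h <;> omega)
    rw [Finset.sum_congr rfl hterm, Finset.sum_add_distrib, Finset.sum_const]
    have hdeg : (G.neighborFinset v).card = G.degree v := G.card_neighborFinset_eq_degree v
    have hsum2 : ∑ u ∈ G.neighborFinset v, εB v u = ∑ u ∈ Sv v, εB v u := by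
      refine (Finset.sum_subset (Finset.filter_subset _ _) ?_).symm
      intro u hu hnu
      refine hεB0 v u (fun hc => hnu ?_)
      exact hmemS v u hc.2
    have hsum3 : ∑ u ∈ Sv v, εB v u = ∑ u ∈ Sv v, (key v hv).choose u := by
      apply Finset.sum_congr rfl
      intro u hu
      exact hεB1 v u hv (Finset.mem_filter.mp hu).2
    rw [hsum2, hsum3, (hspec v hv).2.1, hdeg, nsmul_eq_mul]
    push_cast
    ring
  · -- endpoint p 0, α = 2deg+1
    intro hα1
    have h01adj : G.Adj (p 0) (p 1) := hadj 0 (by omega)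
    have hp1R : p 1 ∈ R := hadjBR _ _ h01adj hp0
    rw [hω1 _ _ hp0 (hRB _ hp1R)]
    by_cases hσ : σ (p 0) (p 1) = 1
    · rw [hεB1 _ _ hp0 hσ, (hspec (p 0) hp0).2.2.1 rfl hσ, if_pos hα1]
      decide
    · rw [hεB0 _ _ (fun hc => hσ hc.2)]
      decide
  · -- endpoint p 0, α ≠ 2deg+1
    intro hα1
    have h01adj : G.Adj (p 0) (p 1) := hadj 0 (by omega)
    have hp1R : p 1 ∈ R := hadjBR _ _ h01adj hp0
    rw [hω1 _ _ hp0 (hRB _ hp1R)]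
    by_cases hσ : σ (p 0) (p 1) = 1
    · rw [hεB1 _ _ hp0 hσ, (hspec (p 0) hp0).2.2.1 rfl hσ, if_neg hα1]
      decide
    · rw [hεB0 _ _ (fun hc => hσ hc.2)]
      decide
  · -- internal vertices
    intro i hi0 hik hB
    have hprevadj : G.Adj (p (i - 1)) (p i) := by
      have h := hadj (i - 1) (by omega)
      rwa [show i - 1 + 1 = i by omega] at h
    have hnextadj : G.Adj (p i) (p (i + 1)) := hadj i hik
    have hprevR : p (i - 1) ∈ R := hadjRB _ _ hprevadj hB
    have hnextR : p (i + 1) ∈ R := hadjBR _ _ hnextadj hB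
    rw [hω2 _ _ (hRB _ hprevR) hB, hω1 _ _ hB (hRB _ hnextR)]
    have hra := hrange (p i) (p (i - 1)) hB
    have hrb := hrange (p i) (p (i + 1)) hB
    have hsum : εB (p i) (p (i - 1)) + εB (p i) (p (i + 1)) = 1 ∨
        εB (p i) (p (i - 1)) + εB (p i) (p (i + 1)) = 0 ∨
        εB (p i) (p (i - 1)) + εB (p i) (p (i + 1)) = -1 := by
      by_cases hσa : σ (p i) (p (i - 1)) = 1
      · by_cases hσb : σ (p i) (p (i + 1)) = 1
        · have h5 := (hspec (p i) hB).2.2.2.2 i hi0 hik rfl hσa hσb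
          rw [hεB1 _ _ hB hσa, hεB1 _ _ hB hσb, h5.1, h5.2]
          norm_num
        · have hb0 := hεB0 (p i) (p (i + 1)) (fun hc => hσb hc.2)
          rcases hra with h | h | h <;> rw [h, hb0] <;> norm_num
      · have ha0 := hεB0 (p i) (p (i - 1)) (fun hc => hσa hc.2)
        rcases hrb with h | h | h <;> rw [h, ha0] <;> norm_num
    simp only [Set.mem_insert_iff, Set.mem_singleton_iff]
    rcases hra with h | h | h <;> rcases hrb with h' | h' | h' <;>
      rw [h, h'] <;> rw [h, h'] at hsum <;>
      rcases hsum with h2 | h2 | h2 <;> omega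
  · -- endpoint p (k-1), α = 2deg+1
    intro hα1
    have hkadj : G.Adj (p (k - 2)) (p (k - 1)) := by
      have h := hadj (k - 2) (by omega)
      rwa [show k - 2 + 1 = k - 1 by omega] at h
    have hpk2R : p (k - 2) ∈ R := hadjRB _ _ hkadj hpk
    rw [hω2 _ _ (hRB _ hpk2R) hpk]
    by_cases hσ : σ (p (k - 1)) (p (k - 2)) = 1
    · rw [hεB1 _ _ hpk hσ, (hspec (p (k - 1)) hpk).2.2.2.1 rfl hσ, if_pos hα1]
      decide
    · rw [hεB0 _ _ (fun hc => hσ hc.2)]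
      decide
  · -- endpoint p (k-1), α ≠ 2deg+1
    intro hα1
    have hkadj : G.Adj (p (k - 2)) (p (k - 1)) := by
      have h := hadj (k - 2) (by omega)
      rwa [show k - 2 + 1 = k - 1 by omega] at h
    have hpk2R : p (k - 2) ∈ R := hadjRB _ _ hkadj hpk
    rw [hω2 _ _ (hRB _ hpk2R) hpk]
    by_cases hσ : σ (p (k - 1)) (p (k - 2)) = 1
    · rw [hεB1 _ _ hpk hσ, (hspec (p (k - 1)) hpk).2.2.2.1 rfl hσ, if_neg hα1]
      decide
    · rw [hεB0 _ _ (fun hc => hσ hc.2)]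
      decide
end

section
/- Let G be a finite connected simple graph with minimum degree at least 2. Then there exist adjacent vertices x, y ∈ V(G) such that the induced subgraph G[V ∖ {x,y}] is connected. -/
open Finset

/-- A walk in `G` whose support lies in `s` gives reachability in the induced graph. -/
lemma reach_of_walk_in {V : Type*} (G : SimpleGraph V) (s : Set V) {a b : V} (w : G.Walk a b)
    (hs : ∀ x ∈ w.support, x ∈ s) :
    (G.induce s).Reachable ⟨a, hs a w.start_mem_support⟩ ⟨b, hs b w.end_mem_support⟩ := by
  induction w with
  | nil => rfl
  | @cons u x b h q ih =>
    have hu : u ∈ s := hs u (by simp)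
    have hx : x ∈ s := hs x (by simp)
    have hq : ∀ y ∈ q.support, y ∈ s := fun y hy => hs y (by simp [hy])
    have hadj : (G.induce s).Adj ⟨u, hu⟩ ⟨x, hx⟩ := by
      simp [SimpleGraph.comap_adj, h]
    exact (hadj.reachable).trans (ih hq)

/-- A walk from inside `C` to outside `C` crosses the boundary at some edge. -/
lemma exists_boundary_edge {V : Type*} (G : SimpleGraph V) (C : Set V) {a b : V}
    (w : G.Walk a b) (ha : a ∈ C) (hb : b ∉ C) :
    ∃ c d, c ∈ C ∧ d ∉ C ∧ G.Adj c d := by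
  induction w with
  | nil => exact absurd ha hb
  | @cons u x b h q ih =>
    by_cases hx : x ∈ C
    · exact ih hx hb
    · exact ⟨u, x, ha, hx, h⟩

/-- every finite connected graph with minimum degree at least 2 has an edge
`{x, y}` whose removal (of both endpoints) leaves a connected graph. -/
theorem stmt9 {V : Type*} [Fintype V] [DecidableEq V] (G : SimpleGraph V) [DecidableRel G.Adj]
    (hG : G.Connected) (hδ : ∀ v : V, 2 ≤ G.degree v) :
    ∃ x y : V, G.Adj x y ∧ (G.induce ({x, y}ᶜ : Set V)).Connected := by
  classical
  obtain ⟨r⟩ := hG.nonempty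
  -- take a longest path
  set P : ℕ → Prop := fun n => ∃ (a b : V) (p : G.Walk a b), p.IsPath ∧ p.length = n with hP
  have h0 : P 0 := ⟨r, r, .nil, by simp, rfl⟩
  set k : ℕ := Nat.findGreatest P (Fintype.card V) with hkdef
  have hk : P k := Nat.findGreatest_spec (Nat.zero_le _) h0
  have hmax : ∀ (a b : V) (q : G.Walk a b), q.IsPath → q.length ≤ k := by
    intro a b q hq
    exact Nat.le_findGreatest (le_of_lt hq.length_lt) ⟨a, b, q, hq, rfl⟩
  obtain ⟨a, b, p, hp, hlen⟩ := hk
  -- all neighbors of the start lie on the path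
  have hnbr : ∀ w, G.Adj a w → w ∈ p.support := by
    intro w hw
    by_contra hws
    have hpath : (SimpleGraph.Walk.cons hw.symm p).IsPath := by
      rw [SimpleGraph.Walk.cons_isPath_iff]; exact ⟨hp, hws⟩
    have := hmax _ _ _ hpath
    simp [SimpleGraph.Walk.length_cons, hlen] at this
  -- hence the path has length at least 2
  have hk2 : 2 ≤ p.length := by
    have hsub : G.neighborFinset a ⊆ p.support.toFinset.erase a := by
      intro w hw
      rw [SimpleGraph.mem_neighborFinset] at hw
      exact Finset.mem_erase.mpr ⟨hw.ne', by simpa using hnbr w hw⟩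
    have hcard : G.degree a ≤ (p.support.toFinset.erase a).card := by
      rw [← SimpleGraph.card_neighborFinset_eq_degree]
      exact Finset.card_le_card hsub
    have hstart : a ∈ p.support.toFinset := by simpa using p.start_mem_support
    rw [Finset.card_erase_of_mem hstart] at hcard
    have hnd : p.support.toFinset.card = p.support.length :=
      List.toFinset_card_of_nodup hp.support_nodup
    rw [hnd, SimpleGraph.Walk.length_support] at hcard
    have := hδ a
    omega
  -- destructure the first two edges of the path
  cases p with
  | nil => simp at hk2
  | @cons _ y _ h₁ q =>
    cases q with
    | nil => simp at hk2
    | @cons _ z _ h₂ p₂ =>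
      refine ⟨a, y, h₁, ?_⟩
      set s : Set V := ({a, y}ᶜ : Set V) with hs
      have hmem_s : ∀ w, w ∈ s ↔ w ≠ a ∧ w ≠ y := by
        intro w; simp [hs]
      -- nodup facts
      have hnd := hp.support_nodup
      rw [SimpleGraph.Walk.support_cons, SimpleGraph.Walk.support_cons,
        List.nodup_cons, List.nodup_cons] at hnd
      obtain ⟨hay, hynp2, _⟩ := hnd
      have hap2 : a ∉ p₂.support := fun hc => hay (by simp [hc])
      have haney : a ≠ y := fun hc => hay (by simp [hc])
      have hp2s : ∀ w ∈ p₂.support, w ∈ s := by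
        intro w hw
        rw [hmem_s]
        exact ⟨fun hc => hap2 (hc ▸ hw), fun hc => hynp2 (hc ▸ hw)⟩
      have hz_s : z ∈ s := hp2s z p₂.start_mem_support
      -- tail paths
      have hp₁ : (SimpleGraph.Walk.cons h₂ p₂).IsPath := hp.of_cons
      have hp₂ : p₂.IsPath := hp₁.of_cons
      -- the set of vertices of s reachable to z in the induced graph
      set R : Set V := {w | ∃ hw : w ∈ s, (G.induce s).Reachable ⟨w, hw⟩ ⟨z, hz_s⟩} with hR
      -- every vertex of p₂'s support is in R
      have hsupR : ∀ w ∈ p₂.support, w ∈ R := by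
        intro w hw
        have hws : w ∈ s := hp2s w hw
        refine ⟨hws, ?_⟩
        have hsub := p₂.support_takeUntil_subset hw
        have : ∀ x ∈ (p₂.takeUntil w hw).support, x ∈ s := fun x hx => hp2s x (hsub hx)
        exact (reach_of_walk_in G s (p₂.takeUntil w hw) this).symm
      -- the "bad" set
      set C : Set V := {w | w ∈ s ∧ w ∉ R} with hC
      -- neighbors of C are in C or equal to y
      have hCnbr : ∀ c ∈ C, ∀ w, G.Adj c w → w ∈ C ∨ w = y := by
        intro c hc w hw
        obtain ⟨hcs, hcR⟩ := hc
        by_cases hws : w ∈ s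
        · left
          refine ⟨hws, fun hwR => hcR ?_⟩
          obtain ⟨hws', hreach⟩ := hwR
          refine ⟨hcs, ?_⟩
          have hadj : (G.induce s).Adj ⟨c, hcs⟩ ⟨w, hws'⟩ := by
            simp [SimpleGraph.comap_adj, hw]
          exact hadj.reachable.trans hreach
        · rw [hmem_s] at hws
          push_neg at hws
          by_cases hwa : w = a
          · exfalso
            subst hwa
            have hcsupp := hnbr c hw.symm
            rw [SimpleGraph.Walk.support_cons, SimpleGraph.Walk.support_cons] at hcsupp
            simp only [List.mem_cons] at hcsupp
            rcases hcsupp with hc1 | hc2 | hc3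
            · exact ((hmem_s c).mp hcs).1 hc1 |>.elim
            · exact ((hmem_s c).mp hcs).2 hc2 |>.elim
            · exact hcR (hsupR c hc3)
          · right; exact hws hwa
      -- C is empty
      have hCempty : ∀ w ∈ s, w ∈ R := by
        by_contra hcon
        push_neg at hcon
        obtain ⟨c0, hc0s, hc0R⟩ := hcon
        have hc0C : c0 ∈ C := ⟨hc0s, hc0R⟩
        have haC : a ∉ C := fun hc => ((hmem_s a).mp hc.1).1 rfl
        obtain ⟨W⟩ := hG.preconnected c0 a
        obtain ⟨c, d', hcC, hd'C, hcd'⟩ := exists_boundary_edge G C W hc0C haC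
        have hdy : d' = y := by
          rcases hCnbr c hcC d' hcd' with h | h
          · exact absurd h hd'C
          · exact h
        rw [hdy] at hcd'
        have hcd : G.Adj c y := hcd'
        -- c has another neighbor w' ≠ y, which must be in C
        have hdeg := hδ c
        have hcard1 : 1 < (G.neighborFinset c).card := by
          rw [SimpleGraph.card_neighborFinset_eq_degree]; omega
        obtain ⟨w₁, hw₁, w₂, hw₂, hw12⟩ := Finset.one_lt_card.mp hcard1
        have : ∃ w' ∈ G.neighborFinset c, w' ≠ y := by
          by_cases h1 : w₁ = y
          · exact ⟨w₂, hw₂, fun h2 => hw12 (h1.trans h2.symm)⟩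
          · exact ⟨w₁, hw₁, h1⟩
        obtain ⟨w', hw'n, hw'y⟩ := this
        rw [SimpleGraph.mem_neighborFinset] at hw'n
        have hw'C : w' ∈ C := by
          rcases hCnbr c hcC w' hw'n with h | h
          · exact h
          · exact absurd h hw'y
        -- build a longer path  w' - c - y - z - ... 
        have hcs := hcC.1
        have hcny : c ≠ y := ((hmem_s c).mp hcs).2
        have hcnp2 : c ∉ p₂.support := fun hc => hcC.2 (hsupR c hc)
        have hw'np2 : w' ∉ p₂.support := fun hc => hw'C.2 (hsupR w' hc)
        have hw'ns := hw'C.1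
        have hQ1 : (SimpleGraph.Walk.cons hcd (SimpleGraph.Walk.cons h₂ p₂)).IsPath := by
          rw [SimpleGraph.Walk.cons_isPath_iff]
          refine ⟨hp₁, ?_⟩
          rw [SimpleGraph.Walk.support_cons]
          simp only [List.mem_cons]
          rintro (h | h)
          · exact hcny h
          · exact hcnp2 h
        have hQ2 : (SimpleGraph.Walk.cons hw'n.symm
            (SimpleGraph.Walk.cons hcd (SimpleGraph.Walk.cons h₂ p₂))).IsPath := by
          rw [SimpleGraph.Walk.cons_isPath_iff]
          refine ⟨hQ1, ?_⟩
          rw [SimpleGraph.Walk.support_cons, SimpleGraph.Walk.support_cons]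
          simp only [List.mem_cons]
          rintro (h | h | h)
          · exact hw'n.ne h.symm
          · exact ((hmem_s w').mp hw'ns).2 h
          · exact hw'np2 h
        have hle := hmax _ _ _ hQ2
        simp only [SimpleGraph.Walk.length_cons] at hle hlen
        omega
      -- conclude connectivity
      rw [SimpleGraph.connected_iff]
      constructor
      · rintro ⟨u₁, hu₁⟩ ⟨u₂, hu₂⟩
        obtain ⟨hw1, hr1⟩ := hCempty u₁ hu₁
        obtain ⟨hw2, hr2⟩ := hCempty u₂ hu₂
        exact hr1.trans hr2.symm
      · exact ⟨⟨z, hz_s⟩⟩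
end

section
/- Let k ≥ 2, let a_1 ≤ a_2 ≤ … ≤ a_k be even integers, and let b be an even integer such that b = a_i for at least one index i. Then there exists a subset S ⊆ {1,…,k} such that, setting b' = b + 2|S| and a_i' = a_i + 2 for i ∈ S and a_i' = a_i for i ∉ S, one has b' ≠ a_i' for all 1 ≤ i ≤ k. -/
open Finset

/-- given `k ≥ 2` sorted even integers `a₁ ≤ … ≤ a_k` and an even integer
`b` equal to some `a_i`, there is a subset `S ⊆ {1,…,k}` such that, after increasing `b` by
`2|S|` and each `a_i` with `i ∈ S` by `2`, the new value of `b` differs from all the new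
values `a_i'`. -/
theorem stmt11 (k : ℕ) (hk : 2 ≤ k) (a : Fin k → ℤ) (hmono : Monotone a)
    (heven : ∀ i, Even (a i)) (b : ℤ) (hb : Even b) (hhit : ∃ i, b = a i) :
    ∃ S : Finset (Fin k),
      ∀ i : Fin k, b + 2 * (S.card : ℤ) ≠ (if i ∈ S then a i + 2 else a i) := by
  classical
  set F : ℕ → Finset (Fin k) := fun t => univ.filter (fun i : Fin k => a i = b + 2 * (t : ℤ))
    with hF
  set E : ℕ → ℕ := fun t => (F t).card with hEdef
  -- sum of E over any finset is at most k
  have hsum : ∀ s : Finset ℕ, (∑ t ∈ s, E t) ≤ k := by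
    intro s
    have hdisj : ∀ x ∈ s, ∀ y ∈ s, x ≠ y → Disjoint (F x) (F y) := by
      intro x _ y _ hxy
      simp only [hF, disjoint_left, mem_filter]
      rintro i ⟨_, hx⟩ ⟨_, hy⟩
      apply hxy
      have : (x : ℤ) = y := by linarith
      exact_mod_cast this
    calc (∑ t ∈ s, E t) = (s.biUnion F).card := (Finset.card_biUnion hdisj).symm
      _ ≤ (univ : Finset (Fin k)).card := card_le_card (subset_univ _)
      _ = k := by simp
  have hEle : ∀ t, E t ≤ k := by
    intro t; simpa using hsum {t}
  have hE0 : 1 ≤ E 0 := by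
    obtain ⟨i, hi⟩ := hhit
    have : i ∈ F 0 := by simp [hF, ← hi]
    have := card_pos.mpr ⟨i, this⟩
    simpa [hEdef] using this
  -- existence of a good m
  have key : ∃ m, 1 ≤ m ∧ m ≤ k ∧ E m ≤ m ∧ E (m - 1) + m ≤ k := by
    have hex : ∃ m, 1 ≤ m ∧ E m ≤ m := ⟨k, by omega, hEle k⟩
    obtain ⟨m₀, ⟨hm₀1, hm₀E⟩, hmin'⟩ :
        ∃ m₀, (1 ≤ m₀ ∧ E m₀ ≤ m₀) ∧ ∀ m < m₀, ¬(1 ≤ m ∧ E m ≤ m) :=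
      ⟨Nat.find hex, Nat.find_spec hex, fun m hm => Nat.find_min hex hm⟩
    have hm₀k : m₀ ≤ k := by
      by_contra hcon
      exact hmin' k (by omega) ⟨by omega, hEle k⟩
    have hmin : ∀ m, 1 ≤ m → m < m₀ → m + 1 ≤ E m := by
      intro m h1 hlt
      have := hmin' m hlt
      omega
    by_cases hc : E (m₀ - 1) + m₀ ≤ k
    · exact ⟨m₀, hm₀1, hm₀k, hm₀E, hc⟩
    · push_neg at hc
      rcases Nat.lt_or_ge m₀ 3 with h3 | h3
      · have hm12 : m₀ = 1 ∨ m₀ = 2 := by omega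
        rcases hm12 with rfl | rfl
        · -- m₀ = 1 : E 0 ≥ k, so all other E t = 0
          have hc0 : k < E 0 + 1 := hc
          have h01 : E 0 + E 1 ≤ k := by
            have := hsum {0, 1}
            rw [Finset.sum_insert (by simp), Finset.sum_singleton] at this
            exact this
          have h02 : E 0 + E 2 ≤ k := by
            have := hsum {0, 2}
            rw [Finset.sum_insert (by simp), Finset.sum_singleton] at this
            exact this
          exact ⟨2, by omega, hk, by omega, show E 1 + 2 ≤ k by omega⟩
        · -- m₀ = 2 : E 1 ≥ 2 and E 1 ≥ k - 1
          have hE1 : 2 ≤ E 1 := hmin 1 le_rfl (by omega)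
          have hc1 : k < E 1 + 2 := hc
          have h01 : E 0 + E 1 ≤ k := by
            have := hsum {0, 1}
            rw [Finset.sum_insert (by simp), Finset.sum_singleton] at this
            exact this
          have hk3 : 3 ≤ k := by omega
          have h01k : E 0 + (E 1 + E (k - 1)) ≤ k := by
            have := hsum {0, 1, k - 1}
            rw [Finset.sum_insert (by simp only [Finset.mem_insert, Finset.mem_singleton]; omega),
              Finset.sum_insert (by simp only [Finset.mem_singleton]; omega),
              Finset.sum_singleton] at this
            exact this
          refine ⟨k, by omega, le_rfl, hEle k, by omega⟩
      · -- m₀ ≥ 3 : contradiction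
        exfalso
        have hrange : (∑ t ∈ Finset.range m₀, E t) ≤ k := hsum _
        have hsplit : Finset.range m₀ = insert 0 (insert (m₀ - 1) (Finset.Ico 1 (m₀ - 1))) := by
          ext t
          simp only [Finset.mem_range, Finset.mem_insert, Finset.mem_Ico]
          omega
        rw [hsplit, Finset.sum_insert (by simp only [Finset.mem_insert, Finset.mem_Ico]; omega),
          Finset.sum_insert (by simp only [Finset.mem_Ico]; omega)] at hrange
        have hIco : 2 * (m₀ - 2) ≤ ∑ t ∈ Finset.Ico 1 (m₀ - 1), E t := by
          calc 2 * (m₀ - 2) = ∑ _t ∈ Finset.Ico 1 (m₀ - 1), 2 := by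
                rw [Finset.sum_const, Nat.card_Ico, smul_eq_mul]; omega
            _ ≤ ∑ t ∈ Finset.Ico 1 (m₀ - 1), E t := by
                apply Finset.sum_le_sum
                intro t ht
                simp only [Finset.mem_Ico] at ht
                exact le_trans (by omega) (hmin t ht.1 (by omega))
        omega
  obtain ⟨m, hm1, hmk, h1, h2⟩ := key
  -- construct S
  have hABsub : F m ⊆ univ \ F (m - 1) := by
    intro i hi
    rw [mem_sdiff]
    refine ⟨mem_univ i, ?_⟩
    simp only [hF, mem_filter, mem_univ, true_and] at hi ⊢
    rw [hi]
    intro h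
    have hcast : ((m - 1 : ℕ) : ℤ) = (m : ℤ) - 1 := by omega
    rw [hcast] at h
    linarith
  have hEm : E m = (F m).card := rfl
  have hEm1 : E (m - 1) = (F (m - 1)).card := rfl
  have hcard1 : (F m).card ≤ m := by omega
  have hcard2 : m ≤ (univ \ F (m - 1)).card := by
    rw [Finset.card_sdiff_of_subset (subset_univ _)]
    have huniv : (univ : Finset (Fin k)).card = k := by simp
    omega
  obtain ⟨S, hAS, hSB, hScard⟩ := Finset.exists_subsuperset_card_eq hABsub hcard1 hcard2
  refine ⟨S, ?_⟩
  intro i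
  rw [hScard]
  split_ifs with hi
  · have hiB : i ∉ F (m - 1) := (mem_sdiff.mp (hSB hi)).2
    intro h
    apply hiB
    simp only [hF, mem_filter, mem_univ, true_and]
    have hcast : ((m - 1 : ℕ) : ℤ) = (m : ℤ) - 1 := by omega
    rw [hcast]
    linarith
  · have hiA : i ∉ F m := fun h => hi (hAS h)
    intro h
    apply hiA
    simp only [hF, mem_filter, mem_univ, true_and]
    linarith
end

section
/- Every finite connected simple graph G on n ≥ 2 vertices admits a partition of its vertex set into an independent set R and a set B = V∖R such that the bipartite subgraph consisting of all edges between R and B is connected. -/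
/-!
Grow a vertex set `S` together with an independent set `R ⊆ S` such that `S` lies in one
component of the `R`–`Rᶜ` bipartite subgraph. A vertex `v` adjacent to `S` can always be added:
if `v` has a neighbour in `R`, keep `R`; otherwise put `v` into `R`. In the second case `v` is
isolated in the old bipartite subgraph, so no old connection is lost, and the edge from `v` to
its neighbour in `S` (which is not in `R`) joins `v` to `S`. As `G` is connected, a maximal
such `S` is the whole vertex set.
-/

open Finset

namespace SimpleGraph

variable {V : Type*} {G : SimpleGraph V} {R S : Set V} {v w : V}

structure IsConnectedCutOn (G : SimpleGraph V) (R S : Set V) : Prop where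
  subset : R ⊆ S
  indep : ∀ a ∈ R, ∀ b ∈ R, ¬ G.Adj a b
  reachable : ∀ a ∈ S, ∀ b ∈ S, (bipartiteBetween G R).Reachable a b

lemma bipartiteBetween_le_insert (hvR : v ∉ R) (hv : ∀ r ∈ R, ¬ G.Adj v r) :
    bipartiteBetween G R ≤ bipartiteBetween G (insert v R) := by
  have hne {a b : V} (hab : (bipartiteBetween G R).Adj a b) : a ≠ v := by
    rintro rfl
    rcases hab with ⟨hab, ⟨haR, -⟩ | ⟨-, hbR⟩⟩
    exacts [hvR haR, hv b hbR hab]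
  intro a b hab
  have ha := hne hab
  have hb := hne hab.symm
  obtain ⟨hab, hcut⟩ := hab
  exact ⟨hab, by simpa [Set.mem_insert_iff, ha, hb] using hcut⟩

lemma forall_reachable_insert {H : SimpleGraph V} {c : V}
    (hS : ∀ a ∈ S, ∀ b ∈ S, H.Reachable a b) (hc : c ∈ S) (hvc : H.Reachable v c) :
    ∀ a ∈ insert v S, ∀ b ∈ insert v S, H.Reachable a b := by
  have hreach_c : ∀ a ∈ insert v S, H.Reachable a c := by
    rintro a (rfl | ha)
    exacts [hvc, hS a ha c hc]
  exact fun a ha b hb => (hreach_c a ha).trans (hreach_c b hb).symm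

namespace IsConnectedCutOn

lemma insert_of_adj_mem (h : G.IsConnectedCutOn R S) {r : V} (hr : r ∈ R) (hvr : G.Adj v r)
    (hvS : v ∉ S) : G.IsConnectedCutOn R (insert v S) where
  subset := h.subset.trans (Set.subset_insert v S)
  indep := h.indep
  reachable := forall_reachable_insert h.reachable (h.subset hr)
    (Adj.reachable ⟨hvr, Or.inr ⟨fun hv => hvS (h.subset hv), hr⟩⟩)

lemma insert_of_forall_not_adj (h : G.IsConnectedCutOn R S) (hw : w ∈ S) (hwv : G.Adj w v)
    (hvS : v ∉ S) (hv : ∀ r ∈ R, ¬ G.Adj v r) : G.IsConnectedCutOn (insert v R) (insert v S) where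
  subset := Set.insert_subset_insert h.subset
  indep := by
    rintro a (rfl | ha) b (rfl | hb)
    exacts [G.irrefl, hv b hb, fun hab => hv a ha hab.symm, h.indep a ha b hb]
  reachable := by
    have hwR : w ∉ insert v R := by
      rintro (rfl | hwR)
      exacts [hvS hw, hv w hwR hwv.symm]
    have hle := bipartiteBetween_le_insert (fun hvR => hvS (h.subset hvR)) hv
    exact forall_reachable_insert (fun a ha b hb => (h.reachable a ha b hb).mono hle) hw
      (Adj.reachable ⟨hwv.symm, Or.inl ⟨Set.mem_insert v R, hwR⟩⟩)

lemma exists_insert (h : G.IsConnectedCutOn R S) (hw : w ∈ S) (hwv : G.Adj w v)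
    (hvS : v ∉ S) : ∃ R', G.IsConnectedCutOn R' (insert v S) := by
  by_cases hv : ∃ r ∈ R, G.Adj v r
  · obtain ⟨r, hr, hvr⟩ := hv
    exact ⟨R, h.insert_of_adj_mem hr hvr hvS⟩
  · push Not at hv
    exact ⟨insert v R, h.insert_of_forall_not_adj hw hwv hvS hv⟩

end IsConnectedCutOn

lemma Connected.exists_isConnectedCutOn_univ [Finite V] (hG : G.Connected) :
    ∃ R, G.IsConnectedCutOn R Set.univ := by
  obtain ⟨u⟩ := hG.nonempty
  have hu : G.IsConnectedCutOn ∅ {u} :=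
    ⟨Set.empty_subset _, by simp, by simp⟩
  obtain ⟨S, huS, ⟨R, hR⟩, hmax⟩ :=
    Finite.exists_le_maximal (p := fun S : Set V => ∃ R, G.IsConnectedCutOn R S) ⟨∅, hu⟩
  suffices hS : S = Set.univ from hS ▸ ⟨R, hR⟩
  refine Set.eq_univ_of_forall fun x => by_contra fun hx => ?_
  obtain ⟨d, -, hdS, hdS'⟩ :=
    (hG.preconnected u x).some.exists_boundary_dart S (huS (Set.mem_singleton u)) hx
  have hlt : S < insert d.snd S := Set.ssubset_insert hdS'
  exact hlt.not_ge (hmax (hR.exists_insert hdS d.adj hdS') hlt.le)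

end SimpleGraph

theorem stmt12_general {V : Type*} [Fintype V] (G : SimpleGraph V)
    (hG : G.Connected) :
    ∃ R : Set V,
      (∀ a ∈ R, ∀ b ∈ R, ¬ G.Adj a b) ∧
      (bipartiteBetween G R).Connected := by
  obtain ⟨R, hR⟩ := hG.exists_isConnectedCutOn_univ
  have : Nonempty V := hG.nonempty
  exact ⟨R, hR.indep, ⟨fun a b => hR.reachable a trivial b trivial⟩⟩

/-- every finite connected graph on at least two vertices has an
independent set `R` such that the bipartite subgraph of all edges between `R` and its
complement is connected (as a graph on the whole vertex set). -/
theorem stmt12 {V : Type*} [Fintype V] [DecidableEq V] (G : SimpleGraph V)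
    (hG : G.Connected) (hcard : 2 ≤ Fintype.card V) :
    ∃ R : Set V,
      (∀ a ∈ R, ∀ b ∈ R, ¬ G.Adj a b) ∧
      (bipartiteBetween G R).Connected :=
  stmt12_general G hG
end

section
/- Let G be a finite simple graph on n ≥ 3 vertices in which some vertex x has degree 1. Then G has a spanning connected structure allowing a good R-B-partition of all of G or of G − x: precisely, there is an independent set R with y ∈ R (y the neighbor of x) such that the bipartite graph of R-versus-complement edges in G − x is connected, and either |V(G−x)∖R| is even (giving a good R-B-partition of G−x) or, adding x to B := (V(G−x)∖R) ∪ {x}, the pair (R,B) is a good R-B-partition of G. -/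
open Finset

namespace SimpleGraph

variable {V : Type*} {G : SimpleGraph V}

lemma bipartiteBetween_adj_of_mem {R : Set V} (hR : G.IsIndepSet R) {r w : V} (hr : r ∈ R)
    (hrw : G.Adj r w) : (bipartiteBetween G R).Adj r w :=
  ⟨hrw, .inl ⟨hr, fun hw => hR hr hw hrw.ne hrw⟩⟩

lemma bipartiteBetween_mono {R R' : Set V} (hR' : G.IsIndepSet R') (hRR' : R ⊆ R') :
    bipartiteBetween G R ≤ bipartiteBetween G R' := by
  rintro a b ⟨hab, ⟨ha, -⟩ | ⟨-, hb⟩⟩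
  · exact bipartiteBetween_adj_of_mem hR' (hRR' ha) hab
  · exact (bipartiteBetween_adj_of_mem hR' (hRR' hb) hab.symm).symm

lemma induce_bipartiteBetween (S R : Set V) :
    (bipartiteBetween G R).induce S = bipartiteBetween (G.induce S) (Subtype.val ⁻¹' R) :=
  rfl

lemma connected_of_connected_induce_compl_singleton {x y : V}
    (h : (G.induce {x}ᶜ).Connected) (hxy : G.Adj x y) : G.Connected := by
  have hy : ∀ v, G.Reachable v y := by
    intro v
    by_cases hv : v = x
    · exact hv ▸ hxy.reachable
    · exact (h.preconnected ⟨v, hv⟩ ⟨y, hxy.ne'⟩).map (Embedding.induce _).toHom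
  have : Nonempty V := ⟨x⟩
  exact ⟨fun u v => (hy u).trans (hy v).symm⟩

def closedNbhd (G : SimpleGraph V) (R : Set V) : Set V := R ∪ {w | ∃ r ∈ R, G.Adj r w}

lemma closedNbhd_mono {R R' : Set V} (h : R ⊆ R') : G.closedNbhd R ⊆ G.closedNbhd R' :=
  Set.union_subset_union h fun _ ⟨r, hr, hrw⟩ => ⟨r, h hr, hrw⟩

structure IsRootedRBSet (G : SimpleGraph V) (y : V) (R : Set V) : Prop where
  root_mem : y ∈ R
  isIndepSet : G.IsIndepSet R
  reachable : ∀ w ∈ G.closedNbhd R, (bipartiteBetween G R).Reachable y w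

lemma isRootedRBSet_singleton (y : V) : G.IsRootedRBSet y {y} where
  root_mem := rfl
  isIndepSet := Set.pairwise_singleton _ _
  reachable := by
    rintro w (rfl | ⟨r, rfl, hyw⟩)
    · rfl
    · exact (bipartiteBetween_adj_of_mem (Set.pairwise_singleton _ _) rfl hyw).reachable

lemma IsRootedRBSet.extend {y u v : V} {R : Set V} (hR : G.IsRootedRBSet y R)
    (hu : u ∈ G.closedNbhd R) (hv : v ∉ G.closedNbhd R) (huv : G.Adj u v) :
    G.IsRootedRBSet y (insert v R) := by
  have hvR : ∀ r ∈ R, ¬G.Adj r v := fun r hr hrv => hv (.inr ⟨r, hr, hrv⟩)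
  have hind : G.IsIndepSet (insert v R) :=
    hR.isIndepSet.insert fun r hr _ => ⟨(hvR r hr ·.symm), hvR r hr⟩
  have hmono := bipartiteBetween_mono hind (Set.subset_insert v R)
  have hreach_v : (bipartiteBetween G (insert v R)).Reachable y v :=
    ((hR.reachable u hu).mono hmono).trans
      (bipartiteBetween_adj_of_mem hind (Set.mem_insert v R) huv.symm).symm.reachable
  refine ⟨Set.mem_insert_of_mem v hR.root_mem, hind, ?_⟩
  rintro w ((rfl | hw) | ⟨r, rfl | hr, hrw⟩)
  · exact hreach_v
  · exact (hR.reachable w (.inl hw)).mono hmono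
  · exact hreach_v.trans (bipartiteBetween_adj_of_mem hind (Set.mem_insert _ R) hrw).reachable
  · exact (hR.reachable w (.inr ⟨r, hr, hrw⟩)).mono hmono

lemma Connected.exists_isIndepSet_connected_bipartiteBetween [Finite V] (hG : G.Connected)
    (y : V) : ∃ R, y ∈ R ∧ G.IsIndepSet R ∧ (bipartiteBetween G R).Connected := by
  obtain ⟨R, hR, hmax⟩ := Set.Finite.exists_maximalFor G.closedNbhd {R | G.IsRootedRBSet y R}
    (Set.toFinite _) ⟨_, isRootedRBSet_singleton y⟩
  have hcover : ∀ w, w ∈ G.closedNbhd R := by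
    by_contra! ⟨w, hw⟩
    obtain ⟨d, -, hu, hv⟩ := (hG.preconnected y w).some.exists_boundary_dart _ (.inl hR.root_mem) hw
    have hR' := hR.extend hu hv d.adj
    exact hv (hmax hR' (closedNbhd_mono (Set.subset_insert _ R)) (.inl (Set.mem_insert _ R)))
  have : Nonempty V := ⟨y⟩
  exact ⟨R, hR.root_mem, hR.isIndepSet,
    ⟨fun u v => (hR.reachable u (hcover u)).symm.trans (hR.reachable v (hcover v))⟩⟩

lemma Connected.exists_isIndepSet_connected_induce_bipartiteBetween [Finite V] {S : Set V}
    (hS : (G.induce S).Connected) {y : V} (hy : y ∈ S) :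
    ∃ R ⊆ S, y ∈ R ∧ G.IsIndepSet R ∧ ((bipartiteBetween G R).induce S).Connected := by
  obtain ⟨R, hyR, hR, hconn⟩ := hS.exists_isIndepSet_connected_bipartiteBetween ⟨y, hy⟩
  refine ⟨Subtype.val '' R, Subtype.coe_image_subset S R, ⟨_, hyR, rfl⟩, ?_, ?_⟩
  · rintro _ ⟨a, ha, rfl⟩ _ ⟨b, hb, rfl⟩ hne
    exact hR ha hb (ne_of_apply_ne _ hne)
  · rwa [induce_bipartiteBetween, Set.preimage_image_eq _ Subtype.val_injective]

end SimpleGraph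

open SimpleGraph

theorem stmt14_general {V : Type*} [Fintype V] [DecidableEq V] (G : SimpleGraph V) [DecidableRel G.Adj]
    (hG : G.Connected)
    (x y : V) (hdx : G.degree x = 1) (hNx : G.neighborFinset x = {y}) :
    ∃ R : Finset V, x ∉ R ∧ y ∈ R ∧
      (∀ a ∈ R, ∀ b ∈ R, ¬ G.Adj a b) ∧
      ((bipartiteBetween G ↑R).induce ({x}ᶜ : Set V)).Connected ∧
      (Even ((Finset.univ.erase x) \ R).card ∨
        (Even ((Finset.univ : Finset V) \ R).card ∧ (bipartiteBetween G ↑R).Connected)) := by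
  have hxy : G.Adj x y := by simp [← G.mem_neighborFinset, hNx]
  obtain ⟨R, hRx, hyR, hR, hconn⟩ := (hG.induce_compl_singleton_of_degree_eq_one hdx)
    |>.exists_isIndepSet_connected_induce_bipartiteBetween (y := y) hxy.ne'
  lift R to Finset V using R.toFinite
  have hxR : x ∉ R := fun h => hRx h rfl
  refine ⟨R, hxR, hyR, fun a ha b hb hab => hR ha hb hab.ne hab, hconn, ?_⟩
  have hparity : #(univ \ R) = #(univ.erase x \ R) + 1 := by
    rw [erase_sdiff_comm, card_erase_add_one (by simpa using hxR)]
  rcases Nat.even_or_odd #(univ.erase x \ R) with heven | hodd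
  · exact .inl heven
  · exact .inr ⟨hparity ▸ hodd.add_one, connected_of_connected_induce_compl_singleton hconn
      (bipartiteBetween_adj_of_mem hR hyR hxy.symm).symm⟩

/-- if `G` is connected with at least 3 vertices and `x` has degree 1 with
neighbor `y`, then there is an independent set `R ⊆ V∖{x}` with `y ∈ R` whose bipartite
subgraph in `G − x` is connected, and either `|V(G−x)∖R|` is even (giving a good
`R`-`B`-partition of `G − x`), or adding `x` to the complement gives a good
`R`-`B`-partition of `G`. -/
theorem stmt14 {V : Type*} [Fintype V] [DecidableEq V] (G : SimpleGraph V) [DecidableRel G.Adj]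
    (hG : G.Connected) (hcard : 3 ≤ Fintype.card V)
    (x y : V) (hdx : G.degree x = 1) (hNx : G.neighborFinset x = {y}) :
    ∃ R : Finset V, x ∉ R ∧ y ∈ R ∧
      (∀ a ∈ R, ∀ b ∈ R, ¬ G.Adj a b) ∧
      ((bipartiteBetween G ↑R).induce ({x}ᶜ : Set V)).Connected ∧
      (Even ((Finset.univ.erase x) \ R).card ∨
        (Even ((Finset.univ : Finset V) \ R).card ∧ (bipartiteBetween G ↑R).Connected)) :=
  stmt14_general G hG x y hdx hNx
end

section
/- Let p = (u_1, u_2, …, u_m) be a path in a bipartite graph with parts S and T, and let ω be an edge-weighting with values in {1,2,3}. Define ω' by increasing by 1 the weight of each path edge {u_i,u_{i+1}} with u_i ∈ S and decreasing by 1 the weight of each path edge {u_i,u_{i+1}} with u_i ∈ T, assuming all these modifications stay within {1,2,3}. Then s_{ω'}(u_i) = s_ω(u_i) for every internal vertex u_i (1 < i < m), while s_{ω'}(u_1) = s_ω(u_1) + 1 if u_1 ∈ S and s_ω(u_1) − 1 if u_1 ∈ T, and s_{ω'}(u_m) = s_ω(u_m) − 1 if u_m ∈ S and s_ω(u_m)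 + 1 if u_m ∈ T. -/
open Finset

/-- The (integer-valued) weighted degree of `v`. -/
def wdegZ {V : Type*} [Fintype V] [DecidableEq V] (G : SimpleGraph V) [DecidableRel G.Adj]
    (ω : V → V → ℤ) (v : V) : ℤ :=
  ∑ u ∈ G.neighborFinset v, ω v u

/-- modifying the weights alternately by `+1`/`−1` along a path
`p = (p 0, …, p (m-1))` of a bipartite graph with parts `S`, `T` (increase on edges leaving
an `S`-vertex, decrease on edges leaving a `T`-vertex) keeps the weighted degree of every
internal vertex unchanged, while the weighted degree of `p 0` changes by `+1` if `p 0 ∈ S`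
and `−1` if `p 0 ∈ T`, and that of `p (m-1)` changes by `−1` if `p (m-1) ∈ S` and `+1` if
`p (m-1) ∈ T`. -/
theorem stmt17 {V : Type*} [Fintype V] [DecidableEq V] (G : SimpleGraph V) [DecidableRel G.Adj]
    (S T : Set V) (hpart : ∀ v : V, (v ∈ S ∧ v ∉ T) ∨ (v ∈ T ∧ v ∉ S))
    (hbip : ∀ a b : V, G.Adj a b → ((a ∈ S ∧ b ∈ T) ∨ (a ∈ T ∧ b ∈ S)))
    (m : ℕ) (hm : 2 ≤ m) (p : ℕ → V)
    (hinj : ∀ i < m, ∀ j < m, p i = p j → i = j)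
    (hadj : ∀ i, i + 1 < m → G.Adj (p i) (p (i + 1)))
    (ω ω' : V → V → ℤ)
    (hsym : ∀ a b, ω a b = ω b a) (hsym' : ∀ a b, ω' a b = ω' b a)
    (hval : ∀ a b, G.Adj a b → ω a b ∈ ({1, 2, 3} : Set ℤ))
    (hval' : ∀ a b, G.Adj a b → ω' a b ∈ ({1, 2, 3} : Set ℤ))
    (hup : ∀ i, i + 1 < m → p i ∈ S → ω' (p i) (p (i + 1)) = ω (p i) (p (i + 1)) + 1)
    (hdown : ∀ i, i + 1 < m → p i ∈ T → ω' (p i) (p (i + 1)) = ω (p i) (p (i + 1)) - 1)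
    (hoff : ∀ a b : V,
      (¬ ∃ i, i + 1 < m ∧ ((a = p i ∧ b = p (i + 1)) ∨ (b = p i ∧ a = p (i + 1)))) →
      ω' a b = ω a b) :
    (∀ i, 0 < i → i + 1 < m → wdegZ G ω' (p i) = wdegZ G ω (p i)) ∧
    ((p 0 ∈ S → wdegZ G ω' (p 0) = wdegZ G ω (p 0) + 1) ∧
     (p 0 ∈ T → wdegZ G ω' (p 0) = wdegZ G ω (p 0) - 1)) ∧
    ((p (m - 1) ∈ S → wdegZ G ω' (p (m - 1)) = wdegZ G ω (p (m - 1)) - 1) ∧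
     (p (m - 1) ∈ T → wdegZ G ω' (p (m - 1)) = wdegZ G ω (p (m - 1)) + 1)) := by
  have key : ∀ v, wdegZ G ω' v - wdegZ G ω v = ∑ u ∈ G.neighborFinset v, (ω' v u - ω v u) := by
    intro v
    simp [wdegZ, Finset.sum_sub_distrib]
  refine ⟨?_, ⟨?_, ?_⟩, ?_, ?_⟩
  · -- internal vertices
    intro i hi0 him
    have hi1 : i - 1 + 1 = i := Nat.succ_pred_eq_of_pos hi0
    have him' : i < m := by omega
    have hadjL : G.Adj (p (i - 1)) (p i) := by
      have := hadj (i - 1) (by omega)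
      rwa [hi1] at this
    have hadjR : G.Adj (p i) (p (i + 1)) := hadj i him
    have hmemL : p (i - 1) ∈ G.neighborFinset (p i) := by
      rw [SimpleGraph.mem_neighborFinset]; exact hadjL.symm
    have hmemR : p (i + 1) ∈ G.neighborFinset (p i) := by
      rw [SimpleGraph.mem_neighborFinset]; exact hadjR
    have hne : p (i - 1) ≠ p (i + 1) := fun h => by
      have := hinj (i - 1) (by omega) (i + 1) (by omega) h; omega
    have hsub : ({p (i - 1), p (i + 1)} : Finset V) ⊆ G.neighborFinset (p i) := by
      intro x hx
      simp only [Finset.mem_insert, Finset.mem_singleton] at hx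
      rcases hx with h | h <;> subst h <;> assumption
    have hzero : ∀ x ∈ G.neighborFinset (p i), x ∉ ({p (i - 1), p (i + 1)} : Finset V) →
        ω' (p i) x - ω (p i) x = 0 := by
      intro x _ hx
      simp only [Finset.mem_insert, Finset.mem_singleton, not_or] at hx
      have : ω' (p i) x = ω (p i) x := by
        apply hoff
        rintro ⟨j, hj, ⟨h1, h2⟩ | ⟨h1, h2⟩⟩
        · have : i = j := hinj i him' j (by omega) h1
          exact hx.2 (by rw [h2, this])
        · have : i = j + 1 := hinj i him' (j + 1) hj h2
          exact hx.1 (by rw [h1]; congr 1; omega)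
      omega
    have hsum : ∑ u ∈ G.neighborFinset (p i), (ω' (p i) u - ω (p i) u)
        = (ω' (p i) (p (i - 1)) - ω (p i) (p (i - 1)))
          + (ω' (p i) (p (i + 1)) - ω (p i) (p (i + 1))) := by
      rw [← Finset.sum_subset hsub hzero, Finset.sum_pair hne]
    have hLval : ω' (p i) (p (i - 1)) - ω (p i) (p (i - 1))
        = ω' (p (i - 1)) (p i) - ω (p (i - 1)) (p i) := by rw [hsym', hsym]
    -- opposite sides along an edge
    have hopp : (p (i - 1) ∈ S ∧ p i ∈ T) ∨ (p (i - 1) ∈ T ∧ p i ∈ S) := hbip _ _ hadjL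
    have hK := key (p i)
    rcases hopp with ⟨hS, hT⟩ | ⟨hT, hS⟩
    · have h1 := hup (i - 1) (by omega) hS
      rw [hi1] at h1
      have h2 := hdown i him hT
      rw [hsum, hLval, h1, h2] at hK
      linarith
    · have h1 := hdown (i - 1) (by omega) hT
      rw [hi1] at h1
      have h2 := hup i him hS
      rw [hsum, hLval, h1, h2] at hK
      linarith
  · -- p 0 ∈ S
    intro hS
    have hadj0 : G.Adj (p 0) (p 1) := hadj 0 (by omega)
    have hmem : p 1 ∈ G.neighborFinset (p 0) := by
      rw [SimpleGraph.mem_neighborFinset]; exact hadj0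
    have hsum : ∑ u ∈ G.neighborFinset (p 0), (ω' (p 0) u - ω (p 0) u)
        = ω' (p 0) (p 1) - ω (p 0) (p 1) := by
      apply Finset.sum_eq_single_of_mem _ hmem
      intro x _ hx
      have : ω' (p 0) x = ω (p 0) x := by
        apply hoff
        rintro ⟨j, hj, ⟨h1, h2⟩ | ⟨h1, h2⟩⟩
        · have : (0 : ℕ) = j := hinj 0 (by omega) j (by omega) h1
          exact hx (by rw [h2, ← this])
        · have : (0 : ℕ) = j + 1 := hinj 0 (by omega) (j + 1) hj h2
          omega
      omega
    have h1 := hup 0 (by omega) hS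
    have hK := key (p 0)
    rw [hsum, h1] at hK
    linarith
  · -- p 0 ∈ T
    intro hT
    have hadj0 : G.Adj (p 0) (p 1) := hadj 0 (by omega)
    have hmem : p 1 ∈ G.neighborFinset (p 0) := by
      rw [SimpleGraph.mem_neighborFinset]; exact hadj0
    have hsum : ∑ u ∈ G.neighborFinset (p 0), (ω' (p 0) u - ω (p 0) u)
        = ω' (p 0) (p 1) - ω (p 0) (p 1) := by
      apply Finset.sum_eq_single_of_mem _ hmem
      intro x _ hx
      have : ω' (p 0) x = ω (p 0) x := by
        apply hoff
        rintro ⟨j, hj, ⟨h1, h2⟩ | ⟨h1, h2⟩⟩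
        · have : (0 : ℕ) = j := hinj 0 (by omega) j (by omega) h1
          exact hx (by rw [h2, ← this])
        · have : (0 : ℕ) = j + 1 := hinj 0 (by omega) (j + 1) hj h2
          omega
      omega
    have h1 := hdown 0 (by omega) hT
    have hK := key (p 0)
    rw [hsum, h1] at hK
    linarith
  all_goals {
    intro hlast
    have he : m - 2 + 1 = m - 1 := by omega
    have hadjL : G.Adj (p (m - 2)) (p (m - 1)) := by
      have := hadj (m - 2) (by omega)
      rwa [he] at this
    have hmem : p (m - 2) ∈ G.neighborFinset (p (m - 1)) := by
      rw [SimpleGraph.mem_neighborFinset]; exact hadjL.symm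
    have hsum : ∑ u ∈ G.neighborFinset (p (m - 1)), (ω' (p (m - 1)) u - ω (p (m - 1)) u)
        = ω' (p (m - 1)) (p (m - 2)) - ω (p (m - 1)) (p (m - 2)) := by
      apply Finset.sum_eq_single_of_mem _ hmem
      intro x _ hx
      have : ω' (p (m - 1)) x = ω (p (m - 1)) x := by
        apply hoff
        rintro ⟨j, hj, ⟨h1, h2⟩ | ⟨h1, h2⟩⟩
        · have : m - 1 = j := hinj (m - 1) (by omega) j (by omega) h1
          omega
        · have : m - 1 = j + 1 := hinj (m - 1) (by omega) (j + 1) hj h2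
          exact hx (by rw [h1]; congr 1; omega)
      omega
    have hLval : ω' (p (m - 1)) (p (m - 2)) - ω (p (m - 1)) (p (m - 2))
        = ω' (p (m - 2)) (p (m - 1)) - ω (p (m - 2)) (p (m - 1)) := by rw [hsym', hsym]
    have hopp : (p (m - 2) ∈ S ∧ p (m - 1) ∈ T) ∨ (p (m - 2) ∈ T ∧ p (m - 1) ∈ S) :=
      hbip _ _ hadjL
    have hK := key (p (m - 1))
    rw [hsum, hLval] at hK
    rcases hopp with ⟨hS2, hT2⟩ | ⟨hT2, hS2⟩
    · have h1 := hup (m - 2) (by omega) hS2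
      rw [he] at h1
      rw [h1] at hK
      rcases hpart (p (m - 1)) with ⟨hh, hh'⟩ | ⟨hh, hh'⟩
      · first | linarith | exact absurd hT2 hh'
      · first | linarith | exact absurd hlast hh'
    · have h1 := hdown (m - 2) (by omega) hT2
      rw [he] at h1
      rw [h1] at hK
      rcases hpart (p (m - 1)) with ⟨hh, hh'⟩ | ⟨hh, hh'⟩
      · first | linarith | exact absurd hlast hh'
      · first | linarith | exact absurd hS2 hh'
  }
end
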